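/- arXiv:2405.05867 — 2 statements merged into one kernel-verified Lean document; each statement's English description precedes it below -/
import Mathlib

section
/- Let α be a peak composition of n with at most one part greater than 2. Then the map f : RW_c(α) → RW_r(α) determined by f(w_c(T)) = w_r(T) for T ∈ SPIT(α) is a descent-preserving colored digraph isomorphism: f is a bijection, Des(f(γ)) = Des(γ) for every γ ∈ RW_c(α), and for all γ, γ′ ∈ RW_c(α) and all i ∈ {1,…,n−1}, one has (γ ⪯_L γ′ and s_i γ = γ′) if and only if (f(γ) ⪯_L f(γ′) and s_i f(γ) = f(γ′)), where s_i denotes the simple transposition (i, i+1) acting by left multiplication. -/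
/-!
Both reading words list the entries of one tableau, in two orders of its boxes, so
`w_c(T) ↦ w_r(T)` is a bijection, and `s_i` sends `w_c(T)` to `w_c(T')` iff it sends `w_r(T)`
to `w_r(T')`. As `s_i γ` lies above `γ` in the left weak order iff `i` is not a descent of `γ`,
everything reduces to descents: `i + 1` must lie to the right of `i` when it is in a lower row,
and to the left when it is in a higher row. By the peak condition, the entries `≤ i` (resp. the
entries below the first one of the row of `i + 1`) fill at least two boxes of each row below
the row of `i` (resp. of `i + 1`). In the wrong configuration this pushes both `i` and `i + 1`
into columns `≥ 3`, i.e. into two different rows with more than two boxes.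
-/

namespace PaperSPIT

/-- The `j`-th part (1-indexed) of a composition presented as a list. -/
def part (α : List ℕ) (j : ℕ) : ℕ := α.getD (j - 1) 0

/-- The largest part. -/
def maxPart (α : List ℕ) : ℕ := α.foldr max 0

/-- The composition diagram: boxes `(i, j)` (column `i`, row `j`), both 1-indexed,
rows numbered from bottom to top. -/
def cd (α : List ℕ) : Finset (ℕ × ℕ) :=
  (Finset.Icc 1 (maxPart α) ×ˢ Finset.Icc 1 α.length).filter fun p => p.1 ≤ part α p.2

/-- `α` is a composition of `n`. -/
def IsComposition (n : ℕ) (α : List ℕ) : Prop :=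
  (∀ a ∈ α, 0 < a) ∧ α.sum = n

/-- `α` is a peak composition of `n`: all parts except possibly the last are `> 1`. -/
def IsPeakComposition (n : ℕ) (α : List ℕ) : Prop :=
  IsComposition n α ∧ ∀ i, i + 1 < α.length → 1 < α.getD i 0

/-- A standard filling of `cd α`: a bijection from the boxes onto `{1, …, n}`
(normalized to be `0` off the diagram). -/
def IsStandardFilling (α : List ℕ) (T : ℕ × ℕ → ℕ) : Prop :=
  Set.BijOn T (cd α : Set (ℕ × ℕ)) (Set.Icc 1 α.sum) ∧
  ∀ p : ℕ × ℕ, p ∉ cd α → T p = 0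

def RowsIncrease (α : List ℕ) (T : ℕ × ℕ → ℕ) : Prop :=
  ∀ i j : ℕ, (i, j) ∈ cd α → (i + 1, j) ∈ cd α → T (i, j) < T (i + 1, j)

def RowsWeaklyIncrease (α : List ℕ) (T : ℕ × ℕ → ℕ) : Prop :=
  ∀ i j : ℕ, (i, j) ∈ cd α → (i + 1, j) ∈ cd α → T (i, j) ≤ T (i + 1, j)

def FirstColIncreases (α : List ℕ) (T : ℕ × ℕ → ℕ) : Prop :=
  ∀ j : ℕ, (1, j) ∈ cd α → (1, j + 1) ∈ cd α → T (1, j) < T (1, j + 1)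

/-- Standard immaculate tableau. -/
def IsSIT (α : List ℕ) (T : ℕ × ℕ → ℕ) : Prop :=
  IsStandardFilling α T ∧ RowsIncrease α T ∧ FirstColIncreases α T

/-- Peak-tableau condition: for every `1 ≤ k ≤ n` the boxes with entries `≤ k`
form the diagram of a peak composition. -/
def PeakCond (α : List ℕ) (T : ℕ × ℕ → ℕ) : Prop :=
  ∀ k : ℕ, 1 ≤ k → k ≤ α.sum → ∃ β : List ℕ,
    IsPeakComposition k β ∧ (cd α).filter (fun p => T p ≤ k) = cd β

/-- Standard peak immaculate tableau. -/
def IsSPIT (α : List ℕ) (T : ℕ × ℕ → ℕ) : Prop := IsSIT α T ∧ PeakCond α T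

def SPITset (α : List ℕ) : Set (ℕ × ℕ → ℕ) := {T | IsSPIT α T}

/-- The Young triple condition. -/
def YoungTriple (α : List ℕ) (T : ℕ × ℕ → ℕ) : Prop :=
  ∀ k i j : ℕ, i < j → (k, j) ∈ cd α → (k + 1, i) ∈ cd α → T (k, j) ≤ T (k + 1, i) →
    (k + 1, j) ∈ cd α ∧ T (k + 1, j) < T (k + 1, i)

/-- Standard Young composition tableau. -/
def IsSYCT (α : List ℕ) (T : ℕ × ℕ → ℕ) : Prop :=
  IsStandardFilling α T ∧ RowsIncrease α T ∧ FirstColIncreases α T ∧ YoungTriple α T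

def SYCTset (α : List ℕ) : Set (ℕ × ℕ → ℕ) := {T | IsSYCT α T}

/-- Standard peak Young composition tableau. -/
def IsSPYCT (α : List ℕ) (T : ℕ × ℕ → ℕ) : Prop := IsSYCT α T ∧ PeakCond α T

def SPYCTset (α : List ℕ) : Set (ℕ × ℕ → ℕ) := {T | IsSPYCT α T}

/-- Row reading word `w_r`: rows from top to bottom, each row left to right. -/
def wR (α : List ℕ) (T : ℕ × ℕ → ℕ) : List ℕ :=
  ((List.range α.length).reverse.map fun j =>
    (List.range (part α (j + 1))).map fun i => T (i + 1, j + 1)).flatten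

/-- The `i`-th column of a filling, read bottom to top. -/
def colList (α : List ℕ) (T : ℕ × ℕ → ℕ) (i : ℕ) : List ℕ :=
  ((List.range α.length).filter fun j => decide (i ≤ part α (j + 1))).map
    fun j => T (i, j + 1)

/-- Column reading word `w_c`: columns left to right, each column bottom to top. -/
def wC (α : List ℕ) (T : ℕ × ℕ → ℕ) : List ℕ :=
  ((List.range (maxPart α)).map fun i => colList α T (i + 1)).flatten

/-- Young reading word `w_Y`: first column top to bottom, then subsequent columns
bottom to top, columns left to right. -/
def wY (α : List ℕ) (T : ℕ × ℕ → ℕ) : List ℕ :=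
  (colList α T 1).reverse ++
    ((List.range (maxPart α - 1)).map fun i => colList α T (i + 2)).flatten

/-- Descent set of a word with distinct letters: `i` such that `i` and `i+1` occur
and `i` occurs to the right of `i+1`. -/
def DesWord (w : List ℕ) : Finset ℕ :=
  w.toFinset.filter fun i => (i + 1) ∈ w ∧ w.idxOf (i + 1) < w.idxOf i


/-- A word of length `n` with distinct letters `1,…,n`, identified with an element of `S_n`
in one-line notation. -/
def IsPermWord (n : ℕ) (w : List ℕ) : Prop := w.Perm (List.range' 1 n)

/-- Inversions of a word (1-indexed positions): pairs `(i,j)` with `i < j` and the letter at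
position `i` larger than the letter at position `j`. -/
def InvW (w : List ℕ) : Set (ℕ × ℕ) :=
  {q | 1 ≤ q.1 ∧ q.1 < q.2 ∧ q.2 ≤ w.length ∧ w.getD (q.2 - 1) 0 < w.getD (q.1 - 1) 0}

/-- The set of column reading words of SPITs of shape `α`. -/
def RWc (α : List ℕ) : Set (List ℕ) := {w | ∃ T ∈ SPITset α, w = wC α T}

/-- The set of row reading words of SPITs of shape `α`. -/
def RWr (α : List ℕ) : Set (List ℕ) := {w | ∃ T ∈ SPITset α, w = wR α T}

/-- The simple transposition `s_i = (i, i+1)` acting on a one-line word by left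
multiplication, i.e. by exchanging the letters (values) `i` and `i+1`. -/
def swapVals (i : ℕ) (w : List ℕ) : List ℕ :=
  w.map fun x => if x = i then i + 1 else if x = i + 1 then i else x

theorem _root_.List.idxOf_map_of_nodup {β γ : Type*} [BEq β] [LawfulBEq β] [BEq γ]
    [LawfulBEq γ] {l : List β} {f : β → γ} (h : (l.map f).Nodup) {a : β} (ha : a ∈ l) :
    (l.map f).idxOf (f a) = l.idxOf a := by
  have hlt := List.idxOf_lt_length_of_mem ha
  have := h.idxOf_getElem (l.idxOf a) (by simpa using hlt)
  simpa [List.getElem_idxOf hlt] using this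

theorem _root_.List.Pairwise.idxOf_lt_idxOf_iff {γ : Type*} [BEq γ] [LawfulBEq γ]
    {l : List γ} {R : γ → γ → Prop} (hl : l.Pairwise R) (hR : ∀ a b, R a b → ¬ R b a)
    {a b : γ} (ha : a ∈ l) (hb : b ∈ l) : l.idxOf a < l.idxOf b ↔ R a b := by
  have ha' := List.idxOf_lt_length_of_mem ha
  have hb' := List.idxOf_lt_length_of_mem hb
  have hrel := List.pairwise_iff_getElem.1 hl
  constructor
  · intro hlt
    simpa only [List.getElem_idxOf] using hrel _ _ ha' hb' hlt
  · intro hab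
    rcases lt_trichotomy (l.idxOf a) (l.idxOf b) with hlt | heq | hgt
    · exact hlt
    · have : a = b := by
        rw [← List.getElem_idxOf ha', ← List.getElem_idxOf hb']
        simp only [heq]
      subst this
      exact absurd hab (hR a a hab)
    · exact absurd (by simpa only [List.getElem_idxOf] using hrel _ _ hb' ha' hgt) (hR a b hab)

theorem _root_.List.eq_of_countP_le_one {γ : Type*} {l : List γ} {P : γ → Bool}
    (h : l.countP P ≤ 1) {a b : ℕ} (ha : a < l.length) (hb : b < l.length)
    (hPa : P l[a]) (hPb : P l[b]) : a = b := by
  wlog hab : a < b generalizing a b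
  · rcases (not_lt.1 hab).lt_or_eq with hba | rfl
    · exact (this hb ha hPb hPa hba).symm
    · rfl
  have htake : 0 < (l.take b).countP P :=
    List.countP_pos_iff.2 ⟨l[a], List.mem_take_iff_getElem.2 ⟨a, by omega, rfl⟩, hPa⟩
  have hdrop : 0 < (l.drop b).countP P :=
    List.countP_pos_iff.2 ⟨l[b], List.mem_drop_iff_getElem.2 ⟨0, by omega, rfl⟩, hPb⟩
  have := List.countP_append (l₁ := l.take b) (l₂ := l.drop b) (p := P)
  rw [List.take_append_drop] at this
  omega

theorem _root_.List.Nodup.eq_idxOf_of_getD_eq {γ : Type*} [BEq γ] [LawfulBEq γ]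
    {w : List γ} (hw : w.Nodup) {t : ℕ} {d x : γ} (ht : t < w.length) (h : w.getD t d = x) :
    t = w.idxOf x := by
  rw [← h, List.getD_eq_getElem _ _ ht, hw.idxOf_getElem]

theorem _root_.List.getD_idxOf_of_mem {γ : Type*} [BEq γ] [LawfulBEq γ] {w : List γ}
    {d x : γ} (hx : x ∈ w) : w.getD (w.idxOf x) d = x := by
  rw [List.getD_eq_getElem _ _ (List.idxOf_lt_length_of_mem hx), List.getElem_idxOf]

theorem mem_desWord_map_iff {γ : Type*} [BEq γ] [LawfulBEq γ] {l : List γ}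
    {R : γ → γ → Prop} (hl : l.Pairwise R) (hR : ∀ a b, R a b → ¬ R b a) {f : γ → ℕ}
    (hf : (l.map f).Nodup) {i : ℕ} :
    i ∈ DesWord (l.map f) ↔ ∃ p ∈ l, ∃ q ∈ l, f p = i ∧ f q = i + 1 ∧ R q p := by
  simp only [DesWord, Finset.mem_filter, List.mem_toFinset, List.mem_map]
  constructor
  · rintro ⟨⟨p, hp, rfl⟩, ⟨q, hq, hq'⟩, hlt⟩
    rw [← hq', List.idxOf_map_of_nodup hf hq, List.idxOf_map_of_nodup hf hp,
      hl.idxOf_lt_idxOf_iff hR hq hp] at hlt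
    exact ⟨p, hp, q, hq, rfl, hq', hlt⟩
  · rintro ⟨p, hp, q, hq, rfl, hq', hlt⟩
    refine ⟨⟨p, hp, rfl⟩, ⟨q, hq, hq'⟩, ?_⟩
    rwa [← hq', List.idxOf_map_of_nodup hf hq, List.idxOf_map_of_nodup hf hp,
      hl.idxOf_lt_idxOf_iff hR hq hp]

theorem swapVals_eq_map_swap (i : ℕ) (w : List ℕ) :
    swapVals i w = w.map (Equiv.swap i (i + 1)) :=
  List.map_congr_left fun x _ => (Equiv.swap_apply_def i (i + 1) x).symm

theorem getD_swapVals {i : ℕ} (hi : 1 ≤ i) (w : List ℕ) (t : ℕ) :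
    (swapVals i w).getD t 0 = Equiv.swap i (i + 1) (w.getD t 0) := by
  have h0 : Equiv.swap i (i + 1) 0 = 0 := Equiv.swap_apply_of_ne_of_ne (by omega) (by omega)
  have := List.getD_map w 0 (n := t) (Equiv.swap i (i + 1))
  rwa [h0, ← swapVals_eq_map_swap] at this

theorem swap_lt_swap_of_lt {i x y : ℕ} (hxy : y < x) (h : ¬ (x = i + 1 ∧ y = i)) :
    Equiv.swap i (i + 1) y < Equiv.swap i (i + 1) x := by
  simp only [Equiv.swap_apply_def]
  split_ifs <;> omega

theorem invW_subset_invW_swapVals_iff {w : List ℕ} (hw : w.Nodup) {i : ℕ} (hi : 1 ≤ i)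
    (hm : i ∈ w) (hm1 : i + 1 ∈ w) : InvW w ⊆ InvW (swapVals i w) ↔ i ∉ DesWord w := by
  simp only [DesWord, Finset.mem_filter, List.mem_toFinset, hm, hm1, true_and, not_lt]
  constructor
  · intro hsub
    by_contra! hlt
    have hinv : (w.idxOf (i + 1) + 1, w.idxOf i + 1) ∈ InvW w :=
      ⟨by omega, by omega, List.idxOf_lt_length_of_mem hm, by
        simp only [Nat.add_sub_cancel, List.getD_idxOf_of_mem hm, List.getD_idxOf_of_mem hm1]
        omega⟩
    have := (hsub hinv).2.2.2
    simp only [Nat.add_sub_cancel, getD_swapVals hi, List.getD_idxOf_of_mem hm,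
      List.getD_idxOf_of_mem hm1, Equiv.swap_apply_left, Equiv.swap_apply_right] at this
    omega
  · rintro hle ⟨s, t⟩ ⟨hs, hst, ht, hlt⟩
    dsimp only at hs hst ht hlt
    refine ⟨hs, hst, by simpa [swapVals] using ht, ?_⟩
    rw [getD_swapVals hi, getD_swapVals hi]
    refine swap_lt_swap_of_lt hlt fun ⟨hsi, hti⟩ => ?_
    have := hw.eq_idxOf_of_getD_eq (by omega) hsi
    have := hw.eq_idxOf_of_getD_eq (by omega) hti
    omega

theorem invW_subset_and_swapVals_eq_iff {w w' : List ℕ} (hw : w.Nodup) {i : ℕ} (hi : 1 ≤ i)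
    (hm : i ∈ w) (hm1 : i + 1 ∈ w) :
    (InvW w ⊆ InvW w' ∧ swapVals i w = w') ↔ (i ∉ DesWord w ∧ swapVals i w = w') := by
  rw [← invW_subset_invW_swapVals_iff hw hi hm hm1]
  exact and_congr_left fun h => by rw [h]

theorem le_maxPart {β : List ℕ} {a : ℕ} (ha : a ∈ β) : a ≤ maxPart β := by
  induction β with
  | nil => simp at ha
  | cons b l ih =>
    simp only [maxPart, List.foldr_cons] at ih ⊢
    rcases List.mem_cons.1 ha with rfl | h
    · exact le_max_left _ _
    · exact (ih h).trans (le_max_right _ _)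

theorem part_le_maxPart {β : List ℕ} {j : ℕ} (hj : 1 ≤ j) (hjl : j ≤ β.length) :
    part β j ≤ maxPart β := by
  rw [part, List.getD_eq_getElem _ _ (by omega)]
  exact le_maxPart (List.getElem_mem _)

theorem mem_cd {β : List ℕ} {c j : ℕ} :
    (c, j) ∈ cd β ↔ 1 ≤ c ∧ 1 ≤ j ∧ j ≤ β.length ∧ c ≤ part β j := by
  simp only [cd, Finset.mem_filter, Finset.mem_product, Finset.mem_Icc]
  constructor
  · rintro ⟨⟨⟨hc, -⟩, hj, hjl⟩, h⟩
    exact ⟨hc, hj, hjl, h⟩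
  · rintro ⟨hc, hj, hjl, h⟩
    exact ⟨⟨⟨hc, h.trans (part_le_maxPart hj hjl)⟩, hj, hjl⟩, h⟩

theorem mem_cd_of_le {β : List ℕ} {c c' j : ℕ} (h : (c, j) ∈ cd β) (hc' : 1 ≤ c')
    (hle : c' ≤ c) : (c', j) ∈ cd β := by
  rw [mem_cd] at h ⊢
  omega

theorem IsPeakComposition.two_mem_cd {k : ℕ} {β : List ℕ} (hβ : IsPeakComposition k β)
    {j : ℕ} (hj : 1 ≤ j) (hjl : j < β.length) : (2, j) ∈ cd β := by
  have := hβ.2 (j - 1) (by omega)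
  rw [mem_cd, part]
  omega

theorem row_eq_of_three_le_col {α : List ℕ} (hone : α.countP (fun a => decide (2 < a)) ≤ 1)
    {cp rp cq rq : ℕ} (hp : (cp, rp) ∈ cd α) (hq : (cq, rq) ∈ cd α) (hcp : 3 ≤ cp)
    (hcq : 3 ≤ cq) : rp = rq := by
  rw [mem_cd, part] at hp hq
  have hrp : rp - 1 < α.length := by omega
  have hrq : rq - 1 < α.length := by omega
  rw [List.getD_eq_getElem _ _ hrp] at hp
  rw [List.getD_eq_getElem _ _ hrq] at hq
  have := List.eq_of_countP_le_one hone hrp hrq (by simp only [decide_eq_true_eq]; omega)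
    (by simp only [decide_eq_true_eq]; omega)
  omega

theorem RowsIncrease.lt_of_lt {α : List ℕ} {T : ℕ × ℕ → ℕ} (h : RowsIncrease α T)
    {c c' j : ℕ} (hc' : 1 ≤ c') (hlt : c' < c) (hc : (c, j) ∈ cd α) :
    T (c', j) < T (c, j) := by
  induction c, hlt using Nat.le_induction with
  | base => exact h c' j (mem_cd_of_le hc hc' c'.le_succ) hc
  | succ c hle ih =>
    have hc₀ : (c, j) ∈ cd α := mem_cd_of_le hc (by omega) c.le_succ
    exact (ih hc₀).trans (h c j hc₀ hc)

theorem RowsIncrease.le_of_le {α : List ℕ} {T : ℕ × ℕ → ℕ} (h : RowsIncrease α T)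
    {c c' j : ℕ} (hc' : 1 ≤ c') (hle : c' ≤ c) (hc : (c, j) ∈ cd α) :
    T (c', j) ≤ T (c, j) := by
  rcases hle.lt_or_eq with hlt | rfl
  · exact (h.lt_of_lt hc' hlt hc).le
  · rfl

namespace IsSPIT

variable {α : List ℕ} {T : ℕ × ℕ → ℕ}

theorem bijOn (hT : IsSPIT α T) : Set.BijOn T (cd α) (Set.Icc 1 α.sum) := hT.1.1.1

theorem rowsIncrease (hT : IsSPIT α T) : RowsIncrease α T := hT.1.2.1

/-- The entries `≤ T (c, r)` form a peak composition reaching row `r`, so each of its rows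
below `r` has at least two boxes. -/
theorem two_mem_cd_of_row_lt (hT : IsSPIT α T) {c r r' : ℕ} (hx : (c, r) ∈ cd α)
    (hr' : 1 ≤ r') (hr : r' < r) : (2, r') ∈ cd α ∧ T (2, r') ≤ T (c, r) := by
  have hk := hT.bijOn.mapsTo (Finset.mem_coe.2 hx)
  obtain ⟨β, hβ, hshape⟩ := hT.2 (T (c, r)) hk.1 hk.2
  have hmem : ∀ y, y ∈ cd β ↔ y ∈ cd α ∧ T y ≤ T (c, r) := fun y => by
    rw [← hshape, Finset.mem_filter]
  have hxβ := (hmem _).2 ⟨hx, le_rfl⟩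
  exact (hmem _).1 (hβ.two_mem_cd hr' (hr.trans_le (mem_cd.1 hxβ).2.2.1))

theorem col_lt_col_of_row_lt (hone : α.countP (fun a => decide (2 < a)) ≤ 1) (hT : IsSPIT α T)
    {cp rp cq rq : ℕ} (hp : (cp, rp) ∈ cd α) (hq : (cq, rq) ∈ cd α)
    (hsucc : T (cq, rq) = T (cp, rp) + 1) (hr : rq < rp) : cp < cq := by
  obtain ⟨h2, hT2⟩ := hT.two_mem_cd_of_row_lt hp (mem_cd.1 hq).2.1 hr
  have hcq : 3 ≤ cq := by
    by_contra! h
    have := hT.rowsIncrease.le_of_le (mem_cd.1 hq).1 (by omega : cq ≤ 2) h2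
    omega
  by_contra! h
  exact hr.ne (row_eq_of_three_le_col hone hq hp hcq (by omega))

theorem col_lt_col_of_row_gt (hone : α.countP (fun a => decide (2 < a)) ≤ 1) (hT : IsSPIT α T)
    {cp rp cq rq : ℕ} (hp : (cp, rp) ∈ cd α) (hq : (cq, rq) ∈ cd α)
    (hsucc : T (cq, rq) = T (cp, rp) + 1) (hr : rp < rq) : cq < cp := by
  have hrp := (mem_cd.1 hp).2.1
  by_contra! hle
  rcases Nat.lt_or_ge cq 2 with hcq | hcq
  · obtain ⟨h2, hT2⟩ := hT.two_mem_cd_of_row_lt hq hrp hr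
    have hcp : cp = 1 := by have := (mem_cd.1 hp).1; omega
    subst hcp
    have : T (1, rp) < T (2, rp) := hT.rowsIncrease 1 rp hp h2
    have := hT.bijOn.injOn (Finset.mem_coe.2 h2) (Finset.mem_coe.2 hq) (by omega)
    simp only [Prod.mk.injEq] at this
    omega
  · have h1 : (1, rq) ∈ cd α := mem_cd_of_le hq le_rfl (by omega)
    have hlt := hT.rowsIncrease.lt_of_lt le_rfl (by omega : 1 < cq) hq
    have hne : T (1, rq) ≠ T (cp, rp) := fun h => by
      have := hT.bijOn.injOn (Finset.mem_coe.2 h1) (Finset.mem_coe.2 hp) h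
      simp only [Prod.mk.injEq] at this
      omega
    obtain ⟨h2, hT2⟩ := hT.two_mem_cd_of_row_lt h1 hrp hr
    have hcp : 3 ≤ cp := by
      by_contra! h
      have := hT.rowsIncrease.le_of_le (mem_cd.1 hp).1 (by omega : cp ≤ 2) h2
      omega
    exact hr.ne (row_eq_of_three_le_col hone hp hq hcp (by omega))

end IsSPIT

def ColLT (p q : ℕ × ℕ) : Prop := p.1 < q.1 ∨ (p.1 = q.1 ∧ p.2 < q.2)

def RowLT (p q : ℕ × ℕ) : Prop := q.2 < p.2 ∨ (p.2 = q.2 ∧ p.1 < q.1)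

theorem colLT_asymm (p q : ℕ × ℕ) (h : ColLT p q) : ¬ ColLT q p := by
  unfold ColLT at *
  omega

theorem rowLT_asymm (p q : ℕ × ℕ) (h : RowLT p q) : ¬ RowLT q p := by
  unfold RowLT at *
  omega

theorem IsSPIT.rowLT_iff_colLT {α : List ℕ} {T : ℕ × ℕ → ℕ}
    (hone : α.countP (fun a => decide (2 < a)) ≤ 1) (hT : IsSPIT α T) {p q : ℕ × ℕ}
    (hp : p ∈ cd α) (hq : q ∈ cd α) (hsucc : T q = T p + 1) : RowLT q p ↔ ColLT q p := by
  obtain ⟨cp, rp⟩ := p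
  obtain ⟨cq, rq⟩ := q
  have hne : (cq, rq) ≠ (cp, rp) := fun h => by rw [h] at hsucc; omega
  simp only [RowLT, ColLT, ne_eq, Prod.mk.injEq] at hne ⊢
  rcases lt_trichotomy rp rq with hr | rfl | hr
  · have := hT.col_lt_col_of_row_gt hone hp hq hsucc hr
    omega
  · omega
  · have := hT.col_lt_col_of_row_lt hone hp hq hsucc hr
    omega

def colBoxes (α : List ℕ) : List (ℕ × ℕ) :=
  ((List.range (maxPart α)).map fun i =>
    ((List.range α.length).filter fun j => decide (i + 1 ≤ part α (j + 1))).map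
      fun j => (i + 1, j + 1)).flatten

def rowBoxes (α : List ℕ) : List (ℕ × ℕ) :=
  ((List.range α.length).reverse.map fun j =>
    (List.range (part α (j + 1))).map fun i => (i + 1, j + 1)).flatten

theorem wC_eq_map_colBoxes (α : List ℕ) (T : ℕ × ℕ → ℕ) : wC α T = (colBoxes α).map T := by
  simp [wC, colBoxes, colList, List.map_flatten, List.map_map, Function.comp_def]

theorem wR_eq_map_rowBoxes (α : List ℕ) (T : ℕ × ℕ → ℕ) : wR α T = (rowBoxes α).map T := by
  simp [wR, rowBoxes, List.map_flatten, List.map_map, Function.comp_def]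

theorem mem_colBoxes {α : List ℕ} {p : ℕ × ℕ} : p ∈ colBoxes α ↔ p ∈ cd α := by
  obtain ⟨c, r⟩ := p
  simp only [colBoxes, Order.add_one_le_iff, List.mem_flatten, List.mem_map, List.mem_range,
    exists_exists_and_eq_and, List.mem_filter, decide_eq_true_eq, Prod.mk.injEq, mem_cd]
  constructor
  · rintro ⟨i, -, j, ⟨hj, hi⟩, rfl, rfl⟩
    omega
  · rintro ⟨hc, hr, hrl, hle⟩
    have := part_le_maxPart hr hrl
    refine ⟨c - 1, by omega, r - 1, ⟨by omega, ?_⟩, by omega, by omega⟩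
    rw [Nat.sub_add_cancel hr]
    omega

theorem mem_rowBoxes {α : List ℕ} {p : ℕ × ℕ} : p ∈ rowBoxes α ↔ p ∈ cd α := by
  obtain ⟨c, r⟩ := p
  simp only [rowBoxes, List.map_reverse, List.mem_flatten, List.mem_reverse, List.mem_map,
    List.mem_range, exists_exists_and_eq_and, Prod.mk.injEq, mem_cd]
  constructor
  · rintro ⟨j, hj, i, hi, rfl, rfl⟩
    omega
  · rintro ⟨hc, hr, hrl, hle⟩
    refine ⟨r - 1, by omega, c - 1, ?_, by omega, by omega⟩
    rw [Nat.sub_add_cancel hr]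
    omega

theorem pairwise_colLT_colBoxes (α : List ℕ) : (colBoxes α).Pairwise ColLT := by
  rw [colBoxes, List.pairwise_flatten, List.pairwise_map]
  constructor
  · simp only [List.mem_map, List.mem_range]
    rintro _ ⟨i, -, rfl⟩
    rw [List.pairwise_map]
    exact (List.pairwise_lt_range.filter _).imp fun h => Or.inr ⟨rfl, by omega⟩
  · refine List.pairwise_lt_range.imp fun hii' a ha b hb => ?_
    simp only [List.mem_map] at ha hb
    obtain ⟨j, -, rfl⟩ := ha
    obtain ⟨j', -, rfl⟩ := hb
    exact Or.inl (by omega)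

theorem pairwise_rowLT_rowBoxes (α : List ℕ) : (rowBoxes α).Pairwise RowLT := by
  rw [rowBoxes, List.pairwise_flatten, List.pairwise_map]
  constructor
  · simp only [List.mem_map, List.mem_reverse, List.mem_range]
    rintro _ ⟨j, -, rfl⟩
    rw [List.pairwise_map]
    exact List.pairwise_lt_range.imp fun h => Or.inr ⟨rfl, by omega⟩
  · rw [List.pairwise_reverse]
    refine List.pairwise_lt_range.imp fun hjj' a ha b hb => ?_
    simp only [List.mem_map] at ha hb
    obtain ⟨i, -, rfl⟩ := ha
    obtain ⟨i', -, rfl⟩ := hb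
    exact Or.inl (by omega)

theorem wC_eq_wC_iff {α : List ℕ} {T T' : ℕ × ℕ → ℕ} :
    wC α T = wC α T' ↔ Set.EqOn T T' (cd α) := by
  rw [wC_eq_map_colBoxes, wC_eq_map_colBoxes, List.map_inj_left]
  exact ⟨fun h p hp => h p (mem_colBoxes.2 hp), fun h p hp => h (mem_colBoxes.1 hp)⟩

theorem wR_eq_wR_iff {α : List ℕ} {T T' : ℕ × ℕ → ℕ} :
    wR α T = wR α T' ↔ Set.EqOn T T' (cd α) := by
  rw [wR_eq_map_rowBoxes, wR_eq_map_rowBoxes, List.map_inj_left]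
  exact ⟨fun h p hp => h p (mem_rowBoxes.2 hp), fun h p hp => h (mem_rowBoxes.1 hp)⟩

theorem swapVals_wC_eq_wC_iff_swapVals_wR_eq_wR {α : List ℕ} {T T' : ℕ × ℕ → ℕ} (i : ℕ) :
    swapVals i (wC α T) = wC α T' ↔ swapVals i (wR α T) = wR α T' := by
  have hC : swapVals i (wC α T) = wC α (Equiv.swap i (i + 1) ∘ T) := by
    rw [swapVals_eq_map_swap, wC_eq_map_colBoxes, wC_eq_map_colBoxes, List.map_map]
  have hR : swapVals i (wR α T) = wR α (Equiv.swap i (i + 1) ∘ T) := by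
    rw [swapVals_eq_map_swap, wR_eq_map_rowBoxes, wR_eq_map_rowBoxes, List.map_map]
  rw [hC, hR, wC_eq_wC_iff, wR_eq_wR_iff]

namespace IsSPIT

variable {α : List ℕ} {T : ℕ × ℕ → ℕ}

theorem nodup_wC (hT : IsSPIT α T) : (wC α T).Nodup := by
  rw [wC_eq_map_colBoxes]
  refine List.Nodup.map_on (fun a ha b hb h => hT.bijOn.injOn ?_ ?_ h)
    ((pairwise_colLT_colBoxes α).imp fun h he => by subst he; exact colLT_asymm _ _ h h)
  · exact Finset.mem_coe.2 (mem_colBoxes.1 ha)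
  · exact Finset.mem_coe.2 (mem_colBoxes.1 hb)

theorem nodup_wR (hT : IsSPIT α T) : (wR α T).Nodup := by
  rw [wR_eq_map_rowBoxes]
  refine List.Nodup.map_on (fun a ha b hb h => hT.bijOn.injOn ?_ ?_ h)
    ((pairwise_rowLT_rowBoxes α).imp fun h he => by subst he; exact rowLT_asymm _ _ h h)
  · exact Finset.mem_coe.2 (mem_rowBoxes.1 ha)
  · exact Finset.mem_coe.2 (mem_rowBoxes.1 hb)

theorem mem_wC_iff (hT : IsSPIT α T) {x : ℕ} : x ∈ wC α T ↔ x ∈ Set.Icc 1 α.sum := by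
  rw [wC_eq_map_colBoxes, List.mem_map, ← hT.bijOn.image_eq]
  simp only [mem_colBoxes, Set.mem_image, Finset.mem_coe]

theorem mem_wR_iff (hT : IsSPIT α T) {x : ℕ} : x ∈ wR α T ↔ x ∈ Set.Icc 1 α.sum := by
  rw [wR_eq_map_rowBoxes, List.mem_map, ← hT.bijOn.image_eq]
  simp only [mem_rowBoxes, Set.mem_image, Finset.mem_coe]

theorem desWord_wR_eq_desWord_wC (hone : α.countP (fun a => decide (2 < a)) ≤ 1)
    (hT : IsSPIT α T) : DesWord (wR α T) = DesWord (wC α T) := by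
  ext i
  have hR := hT.nodup_wR
  have hC := hT.nodup_wC
  rw [wR_eq_map_rowBoxes] at hR ⊢
  rw [wC_eq_map_colBoxes] at hC ⊢
  rw [mem_desWord_map_iff (pairwise_rowLT_rowBoxes α) rowLT_asymm hR,
    mem_desWord_map_iff (pairwise_colLT_colBoxes α) colLT_asymm hC]
  simp only [mem_rowBoxes, mem_colBoxes]
  refine exists_congr fun p => and_congr_right fun hp => exists_congr fun q =>
    and_congr_right fun hq => and_congr_right fun hpi => and_congr_right fun hqi =>
      hT.rowLT_iff_colLT hone hp hq (by omega)

end IsSPIT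

def colToRow (α : List ℕ) (w : List ℕ) : List ℕ :=
  (rowBoxes α).map fun p => w.getD ((colBoxes α).idxOf p) 0

theorem colToRow_wC (α : List ℕ) (T : ℕ × ℕ → ℕ) : colToRow α (wC α T) = wR α T := by
  rw [colToRow, wR_eq_map_rowBoxes, wC_eq_map_colBoxes]
  refine List.map_congr_left fun p hp => ?_
  have hlt := List.idxOf_lt_length_of_mem (mem_colBoxes.2 (mem_rowBoxes.1 hp))
  rw [List.getD_eq_getElem _ _ (by simpa using hlt), List.getElem_map, List.getElem_idxOf]

/-- Let `α` be a peak composition of `n` with at most one part greater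
than `2`. The map `f : RW_c(α) → RW_r(α)` determined by `f(w_c(T)) = w_r(T)` is a
descent-preserving colored digraph isomorphism. -/
theorem descent_preserving_colored_digraph_iso (n : ℕ) (α : List ℕ)
    (hα : IsPeakComposition n α) (hone : α.countP (fun a => decide (2 < a)) ≤ 1) :
    ∃ f : List ℕ → List ℕ,
      (∀ T ∈ SPITset α, f (wC α T) = wR α T) ∧
      Set.BijOn f (RWc α) (RWr α) ∧
      (∀ γ ∈ RWc α, DesWord (f γ) = DesWord γ) ∧
      (∀ γ ∈ RWc α, ∀ γ' ∈ RWc α, ∀ i : ℕ, 1 ≤ i → i ≤ n - 1 →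
        ((InvW γ ⊆ InvW γ' ∧ swapVals i γ = γ') ↔
          (InvW (f γ) ⊆ InvW (f γ') ∧ swapVals i (f γ) = f γ'))) := by
  refine ⟨colToRow α, fun T _ => colToRow_wC α T, ⟨?_, ?_, ?_⟩, ?_, ?_⟩
  · rintro _ ⟨T, hT, rfl⟩
    exact ⟨T, hT, colToRow_wC α T⟩
  · rintro _ ⟨T₁, -, rfl⟩ _ ⟨T₂, -, rfl⟩ h
    rw [colToRow_wC, colToRow_wC, wR_eq_wR_iff] at h
    rwa [wC_eq_wC_iff]
  · rintro _ ⟨T, hT, rfl⟩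
    exact ⟨wC α T, ⟨T, hT, rfl⟩, colToRow_wC α T⟩
  · rintro _ ⟨T, hT, rfl⟩
    rw [colToRow_wC, hT.desWord_wR_eq_desWord_wC hone]
  · rintro _ ⟨T, hT, rfl⟩ _ ⟨T', -, rfl⟩ i hi hin
    have hmem : ∀ x, 1 ≤ x → x ≤ i + 1 → x ∈ wC α T ∧ x ∈ wR α T := fun x h₁ h₂ =>
      have hx : x ∈ Set.Icc 1 α.sum := ⟨h₁, by rw [hα.1.2]; omega⟩
      ⟨hT.mem_wC_iff.2 hx, hT.mem_wR_iff.2 hx⟩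
    rw [colToRow_wC, colToRow_wC,
      invW_subset_and_swapVals_eq_iff hT.nodup_wC hi (hmem i hi le_self_add).1
        (hmem (i + 1) (by omega) le_rfl).1,
      invW_subset_and_swapVals_eq_iff hT.nodup_wR hi (hmem i hi le_self_add).2
        (hmem (i + 1) (by omega) le_rfl).2,
      hT.desWord_wR_eq_desWord_wC hone, swapVals_wC_eq_wC_iff_swapVals_wR_eq_wR]

end PaperSPIT
end

section
/- Let α be a peak composition all of whose parts are at most 3, and let S ⊆ I_α. Then, as multisets, {Des(w_r(T)) : T ∈ ⋂_{s∈S} A_α(s)} = {Des(w_r(T)) : T ∈ SPIT(Δ_S(α))} (for S = ∅ the intersection is taken to be SPIT(α)). -/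
/-!
For `S ⊆ I_α`, the diagram of `Δ_S(α)` arises from `cd(α)` by moving, for each maximal run
`[b, e]` of `S`, the third boxes `(3, e), …, (3, b)` in this order to the end of row `e + 1`.
Carrying the entries along this bijection of boxes maps `⋂_{s ∈ S} A_α(s)` bijectively onto
`SPIT(Δ_S(α))`: the inequalities `A_α(s)` say exactly that the moved entries decrease along a
run, i.e. that the extended rows increase. For a standard immaculate tableau the peak-tableau
condition is local, `T(2, r) < T(1, r + 1)` for every row `r` below the top, and involves no
moved box. Descent sets are preserved because a moved entry `T(3, s)` exceeds every entry of
the first two columns of the rows `s, …, e` by at least two,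
`T(2, t) < T(1, t + 1) ≤ T(α_{t+1}, t + 1) < T(3, t) ≤ T(3, s)`, so an entry consecutive to it
never lies in a row the box jumps over, and boxes with consecutive entries keep their relative
reading order.
-/

namespace PaperSPIT

/-- `I_α = {i : 1 ≤ i ≤ ℓ(α)−1, α_i = 3, α_{i+1} ≠ 1}`. -/
def Ialpha (α : List ℕ) : Finset ℕ :=
  (Finset.Icc 1 (α.length - 1)).filter fun i => part α i = 3 ∧ part α (i + 1) ≠ 1

/-- `A_α(s) = {T ∈ SPIT(α) : T_{α_s, s} > T_{α_{s+1}, s+1}}`. -/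
def Aset (α : List ℕ) (s : ℕ) : Set (ℕ × ℕ → ℕ) :=
  {T ∈ SPITset α | T (part α (s + 1), s + 1) < T (part α s, s)}

/-- The length of the maximal run of consecutive elements of `S` ending at `k − 1`
(for `S` with `0 ∉ S`, e.g. `S ⊆ I_α`). -/
def runLen (S : Finset ℕ) (k : ℕ) : ℕ :=
  k - 1 - (((Finset.range k).filter fun u => u ∉ S).sup id)

/-- `Δ_S(α)`: writing `S ⊆ I_α` as a disjoint union of maximal intervals and applying
`Δ` on each of them; pointwise, the `k`-th part becomes `α_k − 1` if `k ∈ S`,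
`α_k + (length of the maximal run of `S` ending at `k−1`)` if `k ∉ S` and `k − 1 ∈ S`,
and `α_k` otherwise. -/
def deltaS (α : List ℕ) (S : Finset ℕ) : List ℕ :=
  (List.range α.length).map fun k0 =>
    if k0 + 1 ∈ S then part α (k0 + 1) - 1
    else if k0 ∈ S then part α (k0 + 1) + runLen S (k0 + 1)
    else part α (k0 + 1)

section Diagram

variable {γ : List ℕ}

theorem part_mem {r : ℕ} (h1 : 1 ≤ r) (h2 : r ≤ γ.length) : part γ r ∈ γ := by
  rw [part, List.getD_eq_getElem?_getD, List.getElem?_eq_getElem (by omega)]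
  exact List.getElem_mem _

theorem mem_cd_s10 {i r : ℕ} :
    (i, r) ∈ cd γ ↔ 1 ≤ i ∧ 1 ≤ r ∧ r ≤ γ.length ∧ i ≤ part γ r := by
  simp only [cd, Finset.mem_filter, Finset.mem_product, Finset.mem_Icc]
  refine ⟨fun h => ⟨h.1.1.1, h.1.2.1, h.1.2.2, h.2⟩, fun ⟨h1, h2, h3, h4⟩ => ?_⟩
  exact ⟨⟨⟨h1, h4.trans (List.le_max_of_le' 0 (part_mem h2 h3) le_rfl)⟩, h2, h3⟩, h4⟩

theorem sum_part_eq_sum : ∑ r ∈ Finset.Icc 1 γ.length, part γ r = γ.sum :=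
  calc ∑ r ∈ Finset.Icc 1 γ.length, part γ r
      = ∑ i ∈ Finset.range γ.length, part γ (i + 1) := by
        rw [Finset.range_eq_Ico, Finset.sum_Ico_add' (part γ) 0 γ.length 1]; rfl
    _ = ∑ i : Fin γ.length, γ[i] := by rw [Finset.sum_range]; simp [part]
    _ = γ.sum := Fin.sum_univ_getElem γ

theorem card_cd : (cd γ).card = γ.sum := by
  have hcd : cd γ = (Finset.Icc 1 γ.length).biUnion
      fun r => Finset.Icc 1 (part γ r) ×ˢ {r} := by
    ext ⟨i, r⟩
    simp only [mem_cd_s10, Finset.mem_biUnion, Finset.mem_product, Finset.mem_Icc,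
      Finset.mem_singleton]
    constructor
    · rintro ⟨h1, h2, h3, h4⟩
      exact ⟨r, ⟨h2, h3⟩, ⟨h1, h4⟩, rfl⟩
    · rintro ⟨r, ⟨h2, h3⟩, ⟨h1, h4⟩, rfl⟩
      exact ⟨h1, h2, h3, h4⟩
  rw [hcd, Finset.card_biUnion, ← sum_part_eq_sum]
  · simp
  · intro r _ t _ hrt
    simp only [Function.onFun, Finset.disjoint_left, Finset.mem_product, Finset.mem_singleton]
    exact fun p hp ht => hrt (hp.2.symm.trans ht.2)

theorem strictMonoOn_row {T : ℕ × ℕ → ℕ} (hrow : RowsIncrease γ T) (r : ℕ) :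
    StrictMonoOn (fun i => T (i, r)) {i | (i, r) ∈ cd γ} := by
  refine strictMonoOn_of_lt_succ ⟨fun a ha b hb c hc => ?_⟩ fun i _ hi hi1 => ?_
  · simp only [Set.mem_ofPred_eq, mem_cd_s10] at ha hb ⊢
    exact ⟨ha.1.trans hc.1, ha.2.1, ha.2.2.1, hc.2.trans hb.2.2.2⟩
  · rw [Order.succ_eq_add_one] at hi1 ⊢
    exact hrow i r hi hi1

theorem strictMonoOn_firstCol {T : ℕ × ℕ → ℕ} (hpos : ∀ a ∈ γ, 0 < a)
    (hcol : FirstColIncreases γ T) :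
    StrictMonoOn (fun r => T (1, r)) (Set.Icc 1 γ.length) := by
  have h1 : ∀ r ∈ Set.Icc 1 γ.length, (1, r) ∈ cd γ := fun r hr =>
    mem_cd_s10.2 ⟨le_rfl, hr.1, hr.2, hpos _ (part_mem hr.1 hr.2)⟩
  refine strictMonoOn_of_lt_succ Set.ordConnected_Icc fun r _ hr hr1 => ?_
  rw [Order.succ_eq_add_one] at hr1 ⊢
  exact hcol r (h1 r hr) (h1 _ hr1)

end Diagram

section PeakShape

/-- An intrinsic description of the diagrams of peak compositions
(see `IsPeakShape.exists_peakComposition`). -/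
structure IsPeakShape (B : Finset (ℕ × ℕ)) : Prop where
  one_le : ∀ {i r}, (i, r) ∈ B → 1 ≤ i ∧ 1 ≤ r
  mem_of_le : ∀ {i j r}, (j, r) ∈ B → 1 ≤ i → i ≤ j → (i, r) ∈ B
  one_mem_of_le : ∀ {i r t}, (i, r) ∈ B → 1 ≤ t → t ≤ r → (1, t) ∈ B
  two_mem_of_lt : ∀ {i r t}, (i, r) ∈ B → 1 ≤ t → t < r → (2, t) ∈ B

def rowLengths (B : Finset (ℕ × ℕ)) : List ℕ :=
  (List.range (B.sup Prod.snd)).map fun r => (B.filter (·.2 = r + 1)).sup Prod.fst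

variable {B : Finset (ℕ × ℕ)}

theorem part_rowLengths {r : ℕ} (h1 : 1 ≤ r) (h2 : r ≤ B.sup Prod.snd) :
    part (rowLengths B) r = (B.filter (·.2 = r)).sup Prod.fst := by
  rw [part, rowLengths, List.getD_eq_getElem?_getD, List.getElem?_map,
    List.getElem?_range (by omega), Option.map_some, Option.getD_some, Nat.sub_add_cancel h1]

theorem exists_mem_top_row (h : 1 ≤ B.sup Prod.snd) : ∃ i, (i, B.sup Prod.snd) ∈ B := by
  have hne : B.Nonempty := by
    by_contra hB
    simp [Finset.not_nonempty_iff_eq_empty.1 hB] at h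
  obtain ⟨p, hp, hsup⟩ := Finset.exists_mem_eq_sup B hne Prod.snd
  exact ⟨p.1, hsup ▸ hp⟩

namespace IsPeakShape

theorem mem_iff (hB : IsPeakShape B) {i r : ℕ} (hr : 1 ≤ r) :
    (i, r) ∈ B ↔ 1 ≤ i ∧ i ≤ (B.filter (·.2 = r)).sup Prod.fst := by
  refine ⟨fun h => ⟨(hB.one_le h).1, ?_⟩, fun ⟨hi, hle⟩ => ?_⟩
  · exact Finset.le_sup (f := Prod.fst) (b := (i, r)) (Finset.mem_filter.2 ⟨h, rfl⟩)
  · have hne : (B.filter (·.2 = r)).Nonempty := by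
      by_contra hne
      simp [Finset.not_nonempty_iff_eq_empty.1 hne] at hle
      omega
    obtain ⟨⟨j, t⟩, hp, hsup⟩ := Finset.exists_mem_eq_sup _ hne Prod.fst
    obtain ⟨hjt, rfl⟩ : (j, t) ∈ B ∧ t = r := Finset.mem_filter.1 hp
    exact hB.mem_of_le hjt hi (hle.trans_eq hsup)

theorem cd_rowLengths (hB : IsPeakShape B) : cd (rowLengths B) = B := by
  ext ⟨i, r⟩
  rw [mem_cd_s10, rowLengths, List.length_map, List.length_range]
  constructor
  · rintro ⟨hi, hr, hrm, hle⟩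
    rw [← rowLengths, part_rowLengths hr hrm] at hle
    exact (hB.mem_iff hr).2 ⟨hi, hle⟩
  · intro h
    have hr := (hB.one_le h).2
    have hrm : r ≤ B.sup Prod.snd := Finset.le_sup (f := Prod.snd) h
    rw [← rowLengths, part_rowLengths hr hrm]
    exact ⟨(hB.one_le h).1, hr, hrm, ((hB.mem_iff hr).1 h).2⟩

theorem exists_peakComposition (hB : IsPeakShape B) :
    ∃ β, IsPeakComposition B.card β ∧ B = cd β := by
  refine ⟨rowLengths B, ⟨⟨fun a ha => ?_, ?_⟩, fun r hr => ?_⟩, hB.cd_rowLengths.symm⟩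
  · obtain ⟨r, hr, rfl⟩ := List.mem_map.1 ha
    rw [List.mem_range] at hr
    obtain ⟨i, hi⟩ := exists_mem_top_row (B := B) (by omega)
    have h1 := hB.one_mem_of_le hi (Nat.le_add_left 1 r) hr
    exact ((hB.mem_iff (Nat.le_add_left 1 r)).1 h1).2
  · rw [← card_cd, hB.cd_rowLengths]
  · rw [rowLengths, List.length_map, List.length_range] at hr
    obtain ⟨i, hi⟩ := exists_mem_top_row (B := B) (by omega)
    have h2 := hB.two_mem_of_lt hi (Nat.le_add_left 1 r) hr
    have := ((hB.mem_iff (Nat.le_add_left 1 r)).1 h2).2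
    rw [← part_rowLengths (Nat.le_add_left 1 r) hr.le] at this
    simp only [part, add_tsub_cancel_right] at this
    omega

end IsPeakShape

end PeakShape

section LocalPeak

variable {γ : List ℕ} {T : ℕ × ℕ → ℕ}

/-- Equivalent to the peak-tableau condition for standard immaculate tableaux (`peakCond_iff`). -/
def LocalPeakCond (γ : List ℕ) (T : ℕ × ℕ → ℕ) : Prop :=
  ∀ r, (1, r) ∈ cd γ → (1, r + 1) ∈ cd γ → (2, r) ∈ cd γ ∧ T (2, r) < T (1, r + 1)

theorem card_filter_le_eq (hT : IsStandardFilling γ T) {k : ℕ} (hk : k ≤ γ.sum) :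
    ((cd γ).filter (T · ≤ k)).card = k := by
  have himage : ((cd γ).filter (T · ≤ k)).image T = Finset.Icc 1 k := by
    ext v
    simp only [Finset.mem_image, Finset.mem_filter, Finset.mem_Icc]
    constructor
    · rintro ⟨p, ⟨hp, hpk⟩, rfl⟩
      exact ⟨(hT.1.mapsTo hp).1, hpk⟩
    · rintro ⟨hv, hvk⟩
      obtain ⟨p, hp, rfl⟩ := hT.1.surjOn ⟨hv, hvk.trans hk⟩
      exact ⟨p, ⟨hp, hvk⟩, rfl⟩
  rw [← Finset.card_image_of_injOn
    (hT.1.injOn.mono (Finset.coe_subset.2 (Finset.filter_subset _ _))), himage, Nat.card_Icc,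
    Nat.add_sub_cancel]

theorem firstCol_le (hpos : ∀ a ∈ γ, 0 < a) (hrow : RowsIncrease γ T)
    (hcol : FirstColIncreases γ T) {i r t : ℕ} (h : (i, r) ∈ cd γ) (ht : 1 ≤ t) (htr : t ≤ r) : (1, t) ∈ cd γ ∧ T (1, t) ≤ T (i, r) := by
  obtain ⟨hi, hr, hrl, hir⟩ := mem_cd_s10.1 h
  have h1r : (1, r) ∈ cd γ := mem_cd_s10.2 ⟨le_rfl, hr, hrl, hi.trans hir⟩
  refine ⟨mem_cd_s10.2 ⟨le_rfl, ht, htr.trans hrl, hpos _ (part_mem ht (htr.trans hrl))⟩, ?_⟩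
  calc T (1, t) ≤ T (1, r) :=
        (strictMonoOn_firstCol hpos hcol).monotoneOn ⟨ht, htr.trans hrl⟩ ⟨hr, hrl⟩ htr
    _ ≤ T (i, r) := (strictMonoOn_row hrow r).monotoneOn h1r h hi

theorem isPeakShape_filter_le (hpos : ∀ a ∈ γ, 0 < a) (hrow : RowsIncrease γ T)
    (hcol : FirstColIncreases γ T) (hloc : LocalPeakCond γ T) (k : ℕ) : IsPeakShape ((cd γ).filter (T · ≤ k)) where
  one_le h := by
    obtain ⟨h1, h2, -⟩ := mem_cd_s10.1 (Finset.mem_filter.1 h).1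
    exact ⟨h1, h2⟩
  mem_of_le {i j r} h hi hij := by
    obtain ⟨h, hk⟩ := Finset.mem_filter.1 h
    have hir : (i, r) ∈ cd γ := by
      obtain ⟨-, h2, h3, h4⟩ := mem_cd_s10.1 h
      exact mem_cd_s10.2 ⟨hi, h2, h3, hij.trans h4⟩
    exact Finset.mem_filter.2
      ⟨hir, ((strictMonoOn_row hrow r).monotoneOn hir h hij).trans hk⟩
  one_mem_of_le {i r t} h ht htr := by
    obtain ⟨h, hk⟩ := Finset.mem_filter.1 h
    obtain ⟨h1t, hle⟩ := firstCol_le hpos hrow hcol h ht htr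
    exact Finset.mem_filter.2 ⟨h1t, hle.trans hk⟩
  two_mem_of_lt {i r t} h ht htr := by
    obtain ⟨h, hk⟩ := Finset.mem_filter.1 h
    obtain ⟨h1t, -⟩ := firstCol_le hpos hrow hcol h ht htr.le
    obtain ⟨h1t1, hle⟩ := firstCol_le hpos hrow hcol h (Nat.le_add_left 1 t) htr
    obtain ⟨h2t, hlt⟩ := hloc t h1t h1t1
    exact Finset.mem_filter.2 ⟨h2t, (hlt.trans_le hle).le.trans hk⟩

theorem peakCond_iff (hpos : ∀ a ∈ γ, 0 < a) (hT : IsSIT γ T) :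
    PeakCond γ T ↔ LocalPeakCond γ T := by
  refine ⟨fun hpeak r h1 h2 => ?_, fun hloc k hk hkn => ?_⟩
  · obtain ⟨hk, hkn⟩ := hT.1.1.mapsTo h2
    obtain ⟨β, hβ, hcd⟩ := hpeak _ hk hkn
    have hr1 : (1, r + 1) ∈ cd β := hcd ▸ Finset.mem_filter.2 ⟨h2, le_rfl⟩
    obtain ⟨-, hr, -⟩ := mem_cd_s10.1 h1
    obtain ⟨-, -, hrβ, -⟩ := mem_cd_s10.1 hr1
    have h2β : (2, r) ∈ cd β :=
      mem_cd_s10.2 ⟨one_le_two, hr, by omega, hβ.2 (r - 1) (by omega)⟩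
    obtain ⟨h2r, hle⟩ := Finset.mem_filter.1 (hcd ▸ h2β)
    refine ⟨h2r, hle.lt_of_ne fun heq => ?_⟩
    have := hT.1.1.injOn h2r h2 heq
    simp at this
  · obtain ⟨β, hβ, hcd⟩ := (isPeakShape_filter_le hpos hT.2.1 hT.2.2 hloc k).exists_peakComposition
    exact ⟨β, card_filter_le_eq hT.1 hkn ▸ hβ, hcd⟩

end LocalPeak

section Reading

theorem idxOf_lt_idxOf_iff_of_pairwise {ι : Type*} [BEq ι] [LawfulBEq ι] {R : ι → ι → Prop}
    (hR : ∀ a b, R a b → ¬R b a) {l : List ι} (hl : l.Pairwise R) {a b : ι} (ha : a ∈ l)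
    (hb : b ∈ l) : l.idxOf a < l.idxOf b ↔ R a b := by
  have hla := List.idxOf_lt_length_of_mem ha
  have hlb := List.idxOf_lt_length_of_mem hb
  rw [List.pairwise_iff_getElem] at hl
  refine ⟨fun h => ?_, fun h => ?_⟩
  · simpa only [List.getElem_idxOf] using hl _ _ hla hlb h
  · rcases lt_trichotomy (l.idxOf a) (l.idxOf b) with hab | hab | hab
    · exact hab
    · have hab : a = b := by
        rw [← List.getElem_idxOf hla, ← List.getElem_idxOf hlb]
        simp only [hab]
      subst hab
      exact absurd h (hR a a h)
    · have hba := hl _ _ hlb hla hab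
      rw [List.getElem_idxOf, List.getElem_idxOf] at hba
      exact absurd hba (hR _ _ h)

theorem idxOf_map_of_injOn {ι κ : Type*} [BEq ι] [LawfulBEq ι] [BEq κ] [LawfulBEq κ]
    {f : ι → κ} {l : List ι} {a : ι} (ha : a ∈ l) (hf : ∀ b ∈ l, f b = f a → b = a) :
    (l.map f).idxOf (f a) = l.idxOf a := by
  induction l with
  | nil => simp at ha
  | cons b l ih =>
    by_cases hba : b = a
    · subst hba; simp
    · have hfb : f b ≠ f a := fun h => hba (hf b List.mem_cons_self h)
      have ha' : a ∈ l := (List.mem_cons.1 ha).resolve_left (Ne.symm hba)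
      simp only [List.map_cons, List.idxOf_cons, beq_eq_false_iff_ne.2 hfb,
        beq_eq_false_iff_ne.2 hba, cond_false]
      rw [ih ha' fun c hc => hf c (List.mem_cons_of_mem b hc)]

/-- `p` precedes `q` in the row reading order of `wR`. -/
def ReadBefore (p q : ℕ × ℕ) : Prop := q.2 < p.2 ∨ (p.2 = q.2 ∧ p.1 < q.1)

theorem ReadBefore.asymm {p q : ℕ × ℕ} (h : ReadBefore p q) : ¬ReadBefore q p := by
  unfold ReadBefore at *; omega

def readingBoxes (γ : List ℕ) : List (ℕ × ℕ) :=
  ((List.range γ.length).reverse.map fun j =>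
    (List.range (part γ (j + 1))).map fun i => (i + 1, j + 1)).flatten

variable {γ : List ℕ} {T : ℕ × ℕ → ℕ}

theorem wR_eq_map : wR γ T = (readingBoxes γ).map T := by
  simp [wR, readingBoxes, List.map_flatten, Function.comp_def]

theorem mem_readingBoxes {p : ℕ × ℕ} : p ∈ readingBoxes γ ↔ p ∈ cd γ := by
  obtain ⟨i, r⟩ := p
  simp only [readingBoxes, List.mem_flatten, List.mem_map, List.mem_reverse, List.mem_range,
    mem_cd_s10]
  constructor
  · rintro ⟨_, ⟨j, hj, rfl⟩, hmem⟩
    obtain ⟨i', hi', h⟩ := List.mem_map.1 hmem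
    simp only [List.mem_range, Prod.mk.injEq] at hi' h
    obtain ⟨rfl, rfl⟩ := h
    omega
  · rintro ⟨h1, h2, h3, h4⟩
    refine ⟨_, ⟨r - 1, by omega, rfl⟩, List.mem_map.2 ⟨i - 1, ?_, ?_⟩⟩
    · rw [List.mem_range, Nat.sub_add_cancel h2]; omega
    · simp only [Prod.mk.injEq]; omega

theorem pairwise_readingBoxes : (readingBoxes γ).Pairwise ReadBefore := by
  rw [readingBoxes, List.pairwise_flatten, List.pairwise_map, List.pairwise_reverse]
  refine ⟨fun l hl => ?_, List.pairwise_lt_range.imp fun hab x hx y hy => ?_⟩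
  · obtain ⟨j, -, rfl⟩ := List.mem_map.1 hl
    exact List.pairwise_map.2 (List.pairwise_lt_range.imp fun hab => Or.inr ⟨rfl, by omega⟩)
  · obtain ⟨i, -, rfl⟩ := List.mem_map.1 hx
    obtain ⟨i', -, rfl⟩ := List.mem_map.1 hy
    exact Or.inl (by simpa using hab)

theorem mem_desWord_wR_iff (hinj : Set.InjOn T (cd γ)) {v : ℕ} :
    v ∈ DesWord (wR γ T) ↔
      ∃ p ∈ cd γ, ∃ q ∈ cd γ, T p = v ∧ T q = v + 1 ∧ ReadBefore q p := by
  have hidx : ∀ p ∈ cd γ, (wR γ T).idxOf (T p) = (readingBoxes γ).idxOf p := fun p hp => by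
    rw [wR_eq_map]
    exact idxOf_map_of_injOn (mem_readingBoxes.2 hp)
      fun b hb h => hinj (mem_readingBoxes.1 hb) hp h
  have hord : ∀ p ∈ cd γ, ∀ q ∈ cd γ,
      (wR γ T).idxOf (T q) < (wR γ T).idxOf (T p) ↔ ReadBefore q p := fun p hp q hq => by
    rw [hidx p hp, hidx q hq]
    exact idxOf_lt_idxOf_iff_of_pairwise (fun _ _ => ReadBefore.asymm) pairwise_readingBoxes
      (mem_readingBoxes.2 hq) (mem_readingBoxes.2 hp)
  have hmem : ∀ {v}, v ∈ wR γ T ↔ ∃ p ∈ cd γ, T p = v := by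
    simp [wR_eq_map, mem_readingBoxes]
  simp only [DesWord, Finset.mem_filter, List.mem_toFinset]
  constructor
  · rintro ⟨hv, hv1, hlt⟩
    obtain ⟨p, hp, rfl⟩ := hmem.1 hv
    obtain ⟨q, hq, hqv⟩ := hmem.1 hv1
    rw [← hqv, hord p hp q hq] at hlt
    exact ⟨p, hp, q, hq, rfl, hqv, hlt⟩
  · rintro ⟨p, hp, q, hq, rfl, hqv, hlt⟩
    refine ⟨hmem.2 ⟨p, hp, rfl⟩, hmem.2 ⟨q, hq, hqv⟩, ?_⟩
    rwa [← hqv, hord p hp q hq]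

theorem desWord_wR_eq_of_bijOn {γ' : List ℕ} {U : ℕ × ℕ → ℕ} {τ : ℕ × ℕ → ℕ × ℕ}
    (hτ : Set.BijOn τ (cd γ) (cd γ')) (hT : Set.InjOn T (cd γ))
    (hU : ∀ p ∈ cd γ, U (τ p) = T p)
    (hread : ∀ p ∈ cd γ, ∀ q ∈ cd γ, T q = T p + 1 →
      (ReadBefore (τ q) (τ p) ↔ ReadBefore q p)) :
    DesWord (wR γ' U) = DesWord (wR γ T) := by
  have hUinj : Set.InjOn U (τ '' cd γ) := by
    rintro _ ⟨p, hp, rfl⟩ _ ⟨q, hq, rfl⟩ h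
    rw [hU p hp, hU q hq] at h
    rw [hT hp hq h]
  rw [hτ.image_eq] at hUinj
  ext v
  rw [mem_desWord_wR_iff hUinj, mem_desWord_wR_iff hT]
  constructor
  · rintro ⟨_, hp', _, hq', hpv, hqv, hlt⟩
    obtain ⟨p, hp, rfl⟩ := hτ.surjOn hp'
    obtain ⟨q, hq, rfl⟩ := hτ.surjOn hq'
    rw [hU p hp] at hpv
    rw [hU q hq] at hqv
    exact ⟨p, hp, q, hq, hpv, hqv, (hread p hp q hq (by omega)).1 hlt⟩
  · rintro ⟨p, hp, q, hq, hpv, hqv, hlt⟩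
    exact ⟨τ p, hτ.mapsTo hp, τ q, hτ.mapsTo hq, by rw [hU p hp, hpv], by rw [hU q hq, hqv],
      (hread p hp q hq (by omega)).2 hlt⟩

end Reading

section Runs

/-- For `s ∈ S`, the largest `e` with `[s, e] ⊆ S`. -/
noncomputable def runEnd (S : Finset ℕ) (s : ℕ) : ℕ := sInf {u | s ≤ u ∧ u + 1 ∉ S}

/-- The largest `u < r` outside `S` (`0` if there is none). -/
def gapBelow (S : Finset ℕ) (r : ℕ) : ℕ := ((Finset.range r).filter (· ∉ S)).sup id

variable {S : Finset ℕ} {s t u r : ℕ}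

theorem runEnd_spec (S : Finset ℕ) (s : ℕ) : s ≤ runEnd S s ∧ runEnd S s + 1 ∉ S := by
  refine Nat.sInf_mem (s := {u | s ≤ u ∧ u + 1 ∉ S}) ⟨max s (S.sup id), le_max_left _ _, ?_⟩
  intro hmem
  have := Finset.le_sup (f := id) hmem
  simp only [id] at this
  omega

theorem le_runEnd : s ≤ runEnd S s := (runEnd_spec S s).1

theorem runEnd_add_one_notMem : runEnd S s + 1 ∉ S := (runEnd_spec S s).2

theorem runEnd_le (h1 : s ≤ u) (h2 : u + 1 ∉ S) : runEnd S s ≤ u := Nat.sInf_le ⟨h1, h2⟩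

theorem mem_of_le_runEnd (hs : s ∈ S) (h1 : s ≤ t) (h2 : t ≤ runEnd S s) : t ∈ S := by
  by_contra ht
  have hst : s < t := lt_of_le_of_ne h1 fun h => ht (h ▸ hs)
  have := runEnd_le (S := S) (s := s) (u := t - 1) (by omega)
    (by rwa [Nat.sub_add_cancel (by omega)])
  omega

theorem runEnd_mem (hs : s ∈ S) : runEnd S s ∈ S := mem_of_le_runEnd hs le_runEnd le_rfl

theorem runEnd_eq_of_le_runEnd (hs : s ∈ S) (h1 : s ≤ t) (h2 : t ≤ runEnd S s) :
    runEnd S t = runEnd S s := by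
  refine le_antisymm (runEnd_le h2 runEnd_add_one_notMem) (not_lt.1 fun h => ?_)
  exact runEnd_add_one_notMem
    (mem_of_le_runEnd hs (h1.trans (le_runEnd.trans (Nat.le_succ _))) (Nat.succ_le_of_lt h))

theorem runEnd_eq_or_lt (ht : t ∈ S) (hts : t < s) :
    runEnd S s = runEnd S t ∨ runEnd S t < s := by
  rcases lt_or_ge (runEnd S t) s with h | h
  · exact Or.inr h
  · exact Or.inl (runEnd_eq_of_le_runEnd ht hts.le h)

theorem le_gapBelow (h1 : t < r) (h2 : t ∉ S) : t ≤ gapBelow S r :=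
  Finset.le_sup (f := id) (by simp [h1, h2])

theorem mem_of_gapBelow_lt (h1 : gapBelow S r < t) (h2 : t < r) : t ∈ S := by
  by_contra h
  exact absurd (le_gapBelow h2 h) (not_le.2 h1)

theorem gapBelow_spec (h0 : 0 ∉ S) (hr : 1 ≤ r) : gapBelow S r ∉ S ∧ gapBelow S r < r := by
  obtain ⟨u, hu, hequ⟩ := Finset.exists_mem_eq_sup ((Finset.range r).filter (· ∉ S))
    ⟨0, by simp [h0]; omega⟩ id
  simp only [Finset.mem_filter, Finset.mem_range] at hu
  rw [gapBelow, hequ]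
  exact ⟨hu.2, hu.1⟩

theorem runLen_eq : runLen S r = r - 1 - gapBelow S r := rfl

theorem runEnd_add_one_sub_le_runLen (h0 : 0 ∉ S) (hs : s ∈ S) :
    runEnd S s + 1 - s ≤ runLen S (runEnd S s + 1) := by
  obtain ⟨hgS, hglt⟩ := gapBelow_spec (S := S) (r := runEnd S s + 1) h0 (Nat.le_add_left 1 _)
  have : gapBelow S (runEnd S s + 1) < s := by
    by_contra hle
    exact hgS (mem_of_le_runEnd hs (not_lt.1 hle) (Nat.lt_succ_iff.1 hglt))
  rw [runLen_eq]
  omega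

theorem sub_mem_of_le_runLen {d : ℕ} (hr : r ∉ S) (hd1 : 1 ≤ d) (hd : d ≤ runLen S r) :
    r - d ∈ S ∧ runEnd S (r - d) + 1 = r := by
  rw [runLen_eq] at hd
  have hmem : ∀ t, r - d ≤ t → t < r → t ∈ S := fun t h1 h2 =>
    mem_of_gapBelow_lt (by omega) h2
  refine ⟨hmem _ le_rfl (by omega), le_antisymm ?_ ?_⟩
  · have := runEnd_le (S := S) (s := r - d) (u := r - 1) (by omega)
      (by rwa [Nat.sub_add_cancel (by omega)])
    omega
  · by_contra h
    exact runEnd_add_one_notMem (hmem _ (le_runEnd.trans (Nat.le_succ _)) (by omega))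

end Runs

section DeltaShape

variable {α : List ℕ} {S : Finset ℕ} {i r s : ℕ}

theorem mem_Ialpha :
    s ∈ Ialpha α ↔ 1 ≤ s ∧ s + 1 ≤ α.length ∧ part α s = 3 ∧ part α (s + 1) ≠ 1 := by
  simp only [Ialpha, Finset.mem_filter, Finset.mem_Icc]
  omega

theorem zero_notMem_of_subset_Ialpha (hS : S ⊆ Ialpha α) : 0 ∉ S := fun h =>
  absurd (mem_Ialpha.1 (hS h)).1 (by omega)

theorem length_deltaS : (deltaS α S).length = α.length := by simp [deltaS]

theorem part_deltaS (h1 : 1 ≤ r) (h2 : r ≤ α.length) :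
    part (deltaS α S) r = if r ∈ S then part α r - 1
      else if r - 1 ∈ S then part α r + runLen S r else part α r := by
  rw [part, deltaS, List.getD_eq_getElem?_getD, List.getElem?_map,
    List.getElem?_range (by omega), Option.map_some, Option.getD_some, Nat.sub_add_cancel h1]

theorem part_deltaS_of_mem (hS : S ⊆ Ialpha α) (hr : r ∈ S) : part (deltaS α S) r = 2 := by
  obtain ⟨h1, h2, h3, -⟩ := mem_Ialpha.1 (hS hr)
  rw [part_deltaS h1 (by omega), if_pos hr, h3]

theorem part_le_part_deltaS (h1 : 1 ≤ r) (h2 : r ≤ α.length) (hr : r ∉ S) :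
    part α r ≤ part (deltaS α S) r := by
  rw [part_deltaS h1 h2, if_neg hr]
  split_ifs <;> omega

theorem pos_of_mem_deltaS (hpos : ∀ a ∈ α, 0 < a) (hS : S ⊆ Ialpha α) :
    ∀ a ∈ deltaS α S, 0 < a := by
  intro a ha
  obtain ⟨r, hr, rfl⟩ := List.mem_map.1 ha
  rw [List.mem_range] at hr
  have := hpos _ (part_mem (Nat.le_add_left 1 r) hr)
  split_ifs with h
  · rw [(mem_Ialpha.1 (hS h)).2.2.1]; omega
  all_goals omega

theorem mem_cd_deltaS_of_mem_cd (hS : S ⊆ Ialpha α) (hq : (i, r) ∈ cd α)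
    (h : ¬(i = 3 ∧ r ∈ S)) : (i, r) ∈ cd (deltaS α S) := by
  obtain ⟨hi, h1, h2, hir⟩ := mem_cd_s10.1 hq
  refine mem_cd_s10.2 ⟨hi, h1, length_deltaS.symm ▸ h2, ?_⟩
  by_cases hr : r ∈ S
  · rw [part_deltaS_of_mem hS hr]
    have := (mem_Ialpha.1 (hS hr)).2.2.1
    have : i ≠ 3 := fun h3 => h ⟨h3, hr⟩
    omega
  · exact hir.trans (part_le_part_deltaS h1 h2 hr)

theorem mem_cd_of_mem_cd_deltaS (hp : (i, r) ∈ cd (deltaS α S)) (h : i ≤ part α r) :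
    (i, r) ∈ cd α := by
  obtain ⟨hi, h1, h2, -⟩ := mem_cd_s10.1 hp
  exact mem_cd_s10.2 ⟨hi, h1, length_deltaS ▸ h2, h⟩

theorem mem_cd_one_iff (hpos : ∀ a ∈ α, 0 < a) (hS : S ⊆ Ialpha α) :
    (1, r) ∈ cd (deltaS α S) ↔ (1, r) ∈ cd α := by
  simp only [mem_cd_s10, length_deltaS, le_refl, true_and]
  refine ⟨fun h => ⟨h.1, h.2.1, hpos _ (part_mem h.1 h.2.1)⟩, fun h => ⟨h.1, h.2.1, ?_⟩⟩
  by_cases hr : r ∈ S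
  · rw [part_deltaS_of_mem hS hr]; omega
  · exact h.2.2.trans (part_le_part_deltaS h.1 h.2.1 hr)

/-- A box `(i, r)` of `Δ_S(α)` outside `cd α` comes from the box `(3, r - (i - α_r))`, whose
run ends at row `r - 1`. -/
theorem sub_mem_of_part_lt (hp : (i, r) ∈ cd (deltaS α S)) (hgt : part α r < i) :
    r - (i - part α r) ∈ S ∧ runEnd S (r - (i - part α r)) + 1 = r := by
  obtain ⟨-, h1, h2, hle⟩ := mem_cd_s10.1 hp
  rw [length_deltaS] at h2
  rw [part_deltaS h1 h2] at hle
  split_ifs at hle with hr hr1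
  · omega
  · exact sub_mem_of_le_runLen hr (by omega) (by omega)
  · omega

end DeltaShape

section DeltaBox

noncomputable def deltaBox (α : List ℕ) (S : Finset ℕ) (q : ℕ × ℕ) : ℕ × ℕ :=
  if q.1 = 3 ∧ q.2 ∈ S then
    (part α (runEnd S q.2 + 1) + (runEnd S q.2 + 1 - q.2), runEnd S q.2 + 1)
  else q

def deltaBoxInv (α : List ℕ) (p : ℕ × ℕ) : ℕ × ℕ :=
  if p.1 ≤ part α p.2 then p else (3, p.2 - (p.1 - part α p.2))

variable {α : List ℕ} {S : Finset ℕ} {i r s : ℕ}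

theorem deltaBox_three_of_mem (hs : s ∈ S) :
    deltaBox α S (3, s) = (part α (runEnd S s + 1) + (runEnd S s + 1 - s), runEnd S s + 1) :=
  if_pos ⟨rfl, hs⟩

theorem deltaBox_of_not_moved (h : ¬(i = 3 ∧ r ∈ S)) : deltaBox α S (i, r) = (i, r) := if_neg h

theorem deltaBoxInv_of_le (h : i ≤ part α r) : deltaBoxInv α (i, r) = (i, r) := if_pos h

theorem deltaBoxInv_of_lt (h : part α r < i) :
    deltaBoxInv α (i, r) = (3, r - (i - part α r)) := if_neg (not_le.2 h)

theorem deltaBox_three_mem (hS : S ⊆ Ialpha α) (hs : s ∈ S) :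
    deltaBox α S (3, s) ∈ cd (deltaS α S) := by
  have hlen := (mem_Ialpha.1 (hS (runEnd_mem hs))).2.1
  rw [deltaBox_three_of_mem hs, mem_cd_s10, length_deltaS, part_deltaS (by omega) hlen,
    if_neg runEnd_add_one_notMem, Nat.add_sub_cancel, if_pos (runEnd_mem hs)]
  have := runEnd_add_one_sub_le_runLen (zero_notMem_of_subset_Ialpha hS) hs
  have := le_runEnd (S := S) (s := s)
  omega

theorem deltaBox_mapsTo (hS : S ⊆ Ialpha α) :
    Set.MapsTo (deltaBox α S) (cd α) (cd (deltaS α S)) := by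
  rintro ⟨i, r⟩ hq
  by_cases h : i = 3 ∧ r ∈ S
  · obtain ⟨rfl, hr⟩ := h
    exact deltaBox_three_mem hS hr
  · rw [deltaBox_of_not_moved h]
    exact mem_cd_deltaS_of_mem_cd hS hq h

theorem deltaBoxInv_mapsTo (hS : S ⊆ Ialpha α) :
    Set.MapsTo (deltaBoxInv α) (cd (deltaS α S)) (cd α) := by
  rintro ⟨i, r⟩ hp
  rcases le_or_gt i (part α r) with h | h
  · rw [deltaBoxInv_of_le h]
    exact mem_cd_of_mem_cd_deltaS hp h
  · rw [deltaBoxInv_of_lt h]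
    obtain ⟨h1, h2, h3, -⟩ := mem_Ialpha.1 (hS (sub_mem_of_part_lt hp h).1)
    exact mem_cd_s10.2 ⟨by omega, h1, by omega, h3.ge⟩

theorem deltaBox_invOn (hS : S ⊆ Ialpha α) :
    Set.InvOn (deltaBoxInv α) (deltaBox α S) (cd α) (cd (deltaS α S)) := by
  constructor
  · rintro ⟨i, r⟩ hq
    by_cases h : i = 3 ∧ r ∈ S
    · obtain ⟨rfl, hr⟩ := h
      have := le_runEnd (S := S) (s := r)
      rw [deltaBox_three_of_mem hr, deltaBoxInv_of_lt (by omega)]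
      exact Prod.ext rfl (by dsimp only; omega)
    · rw [deltaBox_of_not_moved h, deltaBoxInv_of_le (mem_cd_s10.1 hq).2.2.2]
  · rintro ⟨i, r⟩ hp
    rcases le_or_gt i (part α r) with h | h
    · rw [deltaBoxInv_of_le h, deltaBox_of_not_moved]
      rintro ⟨rfl, hr⟩
      have := (mem_cd_s10.1 hp).2.2.2
      rw [part_deltaS_of_mem hS hr] at this
      omega
    · obtain ⟨hs, he⟩ := sub_mem_of_part_lt hp h
      have := (mem_Ialpha.1 (hS hs)).1
      rw [deltaBoxInv_of_lt h, deltaBox_three_of_mem hs, he]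
      exact Prod.ext (by dsimp only; omega) rfl

theorem deltaBox_bijOn (hS : S ⊆ Ialpha α) :
    Set.BijOn (deltaBox α S) (cd α) (cd (deltaS α S)) :=
  (deltaBox_invOn hS).bijOn (deltaBox_mapsTo hS) (deltaBoxInv_mapsTo hS)

theorem deltaBoxInv_bijOn (hS : S ⊆ Ialpha α) :
    Set.BijOn (deltaBoxInv α) (cd (deltaS α S)) (cd α) :=
  (deltaBox_invOn hS).symm.bijOn (deltaBoxInv_mapsTo hS) (deltaBox_mapsTo hS)

theorem sum_deltaS (hS : S ⊆ Ialpha α) : (deltaS α S).sum = α.sum := by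
  rw [← card_cd, ← card_cd]
  exact Finset.card_nbij' _ _ (deltaBoxInv_mapsTo hS) (deltaBox_mapsTo hS)
    (deltaBox_invOn hS).2 (deltaBox_invOn hS).1

end DeltaBox

section DeltaFilling

def deltaFilling (α : List ℕ) (S : Finset ℕ) (T : ℕ × ℕ → ℕ) (p : ℕ × ℕ) : ℕ :=
  if p ∈ cd (deltaS α S) then T (deltaBoxInv α p) else 0

noncomputable def deltaFillingInv (α : List ℕ) (S : Finset ℕ) (U : ℕ × ℕ → ℕ) (q : ℕ × ℕ) :
    ℕ :=
  if q ∈ cd α then U (deltaBox α S q) else 0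

variable {α : List ℕ} {S : Finset ℕ} {T U : ℕ × ℕ → ℕ} {p q : ℕ × ℕ} {i r : ℕ}

theorem deltaFilling_of_mem (hp : p ∈ cd (deltaS α S)) :
    deltaFilling α S T p = T (deltaBoxInv α p) := if_pos hp

theorem deltaFilling_deltaBox (hS : S ⊆ Ialpha α) (hq : q ∈ cd α) :
    deltaFilling α S T (deltaBox α S q) = T q := by
  rw [deltaFilling_of_mem (deltaBox_mapsTo hS hq), (deltaBox_invOn hS).1 hq]

theorem deltaFilling_of_not_moved (hS : S ⊆ Ialpha α) (hq : (i, r) ∈ cd α)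
    (h : ¬(i = 3 ∧ r ∈ S)) :
    deltaFilling α S T (i, r) = T (i, r) := by
  simpa only [deltaBox_of_not_moved h] using deltaFilling_deltaBox (T := T) hS hq

theorem deltaFillingInv_of_mem (hq : q ∈ cd α) :
    deltaFillingInv α S U q = U (deltaBox α S q) := if_pos hq

theorem deltaFillingInv_of_not_moved (hq : (i, r) ∈ cd α) (h : ¬(i = 3 ∧ r ∈ S)) :
    deltaFillingInv α S U (i, r) = U (i, r) := by
  rw [deltaFillingInv_of_mem hq, deltaBox_of_not_moved h]

theorem deltaFillingInv_deltaFilling (hS : S ⊆ Ialpha α) (hT0 : ∀ p ∉ cd α, T p = 0) :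
    deltaFillingInv α S (deltaFilling α S T) = T := by
  funext q
  by_cases hq : q ∈ cd α
  · rw [deltaFillingInv_of_mem hq, deltaFilling_deltaBox hS hq]
  · rw [deltaFillingInv, if_neg hq, hT0 q hq]

theorem deltaFilling_deltaFillingInv (hS : S ⊆ Ialpha α)
    (hU0 : ∀ p ∉ cd (deltaS α S), U p = 0) : deltaFilling α S (deltaFillingInv α S U) = U := by
  funext p
  by_cases hp : p ∈ cd (deltaS α S)
  · rw [deltaFilling_of_mem hp, deltaFillingInv_of_mem (deltaBoxInv_mapsTo hS hp),
      (deltaBox_invOn hS).2 hp]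
  · rw [deltaFilling, if_neg hp, hU0 p hp]

theorem isStandardFilling_deltaFilling (hS : S ⊆ Ialpha α) (hT : IsStandardFilling α T) :
    IsStandardFilling (deltaS α S) (deltaFilling α S T) := by
  refine ⟨?_, fun p hp => if_neg hp⟩
  rw [sum_deltaS hS]
  exact (hT.1.comp (deltaBoxInv_bijOn hS)).congr fun p hp => (deltaFilling_of_mem hp).symm

theorem isStandardFilling_deltaFillingInv (hS : S ⊆ Ialpha α)
    (hU : IsStandardFilling (deltaS α S) U) : IsStandardFilling α (deltaFillingInv α S U) := by
  refine ⟨?_, fun q hq => if_neg hq⟩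
  rw [← sum_deltaS hS]
  exact (hU.1.comp (deltaBox_bijOn hS)).congr fun q hq => (deltaFillingInv_of_mem hq).symm

end DeltaFilling

section Forward

variable {α : List ℕ} {S : Finset ℕ} {T : ℕ × ℕ → ℕ} {s : ℕ}

theorem strictAntiOn_entry_three (hS : S ⊆ Ialpha α)
    (hA : ∀ s ∈ S, T (part α (s + 1), s + 1) < T (part α s, s)) (hs : s ∈ S) :
    StrictAntiOn (fun t => T (3, t)) (Set.Icc s (runEnd S s)) := by
  refine strictAntiOn_of_succ_lt Set.ordConnected_Icc fun t _ ht ht1 => ?_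
  rw [Order.succ_eq_add_one] at ht1 ⊢
  have htS := mem_of_le_runEnd hs ht.1 ht.2
  have := hA t htS
  rwa [(mem_Ialpha.1 (hS htS)).2.2.1,
    (mem_Ialpha.1 (hS (mem_of_le_runEnd hs (ht.1.trans (Nat.le_succ t)) ht1.2))).2.2.1] at this

theorem rowsIncrease_deltaFilling (hS : S ⊆ Ialpha α) (hrow : RowsIncrease α T)
    (hA : ∀ s ∈ S, T (part α (s + 1), s + 1) < T (part α s, s)) :
    RowsIncrease (deltaS α S) (deltaFilling α S T) := by
  intro i r h h1
  rw [deltaFilling_of_mem h, deltaFilling_of_mem h1]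
  rcases le_or_gt (i + 1) (part α r) with hle | hgt
  · rw [deltaBoxInv_of_le (by omega), deltaBoxInv_of_le hle]
    exact hrow i r (mem_cd_of_mem_cd_deltaS h (by omega)) (mem_cd_of_mem_cd_deltaS h1 hle)
  obtain ⟨hs, he⟩ := sub_mem_of_part_lt h1 hgt
  have hs1 := (mem_Ialpha.1 (hS hs)).1
  rw [deltaBoxInv_of_lt hgt]
  rcases le_or_gt i (part α r) with hle | hgt'
  · -- the box `(i + 1, r)` is the first one added to row `r`, coming from row `r - 1`
    obtain rfl : i = part α r := by omega
    rw [Nat.add_sub_cancel_left] at hs hs1 ⊢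
    rw [deltaBoxInv_of_le le_rfl]
    have := hA _ hs
    rwa [Nat.sub_add_cancel (by omega : 1 ≤ r), (mem_Ialpha.1 (hS hs)).2.2.1] at this
  · rw [deltaBoxInv_of_lt hgt']
    have := le_runEnd (S := S) (s := r - (i + 1 - part α r))
    exact strictAntiOn_entry_three hS hA hs ⟨le_rfl, by omega⟩ ⟨by omega, by omega⟩ (by omega)

theorem firstColIncreases_deltaFilling (hpos : ∀ a ∈ α, 0 < a) (hS : S ⊆ Ialpha α)
    (hcol : FirstColIncreases α T) :
    FirstColIncreases (deltaS α S) (deltaFilling α S T) := by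
  intro r h h1
  rw [mem_cd_one_iff hpos hS] at h h1
  rw [deltaFilling_of_not_moved hS h (by omega), deltaFilling_of_not_moved hS h1 (by omega)]
  exact hcol r h h1

theorem localPeakCond_deltaFilling (hpos : ∀ a ∈ α, 0 < a) (hS : S ⊆ Ialpha α)
    (hloc : LocalPeakCond α T) : LocalPeakCond (deltaS α S) (deltaFilling α S T) := by
  intro r h h1
  rw [mem_cd_one_iff hpos hS] at h h1
  obtain ⟨h2, hlt⟩ := hloc r h h1
  rw [deltaFilling_of_not_moved hS h2 (by omega), deltaFilling_of_not_moved hS h1 (by omega)]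
  exact ⟨mem_cd_deltaS_of_mem_cd hS h2 (by omega), hlt⟩

theorem isSPIT_deltaFilling (hpos : ∀ a ∈ α, 0 < a) (hS : S ⊆ Ialpha α) (hT : IsSPIT α T)
    (hA : ∀ s ∈ S, T (part α (s + 1), s + 1) < T (part α s, s)) :
    IsSPIT (deltaS α S) (deltaFilling α S T) := by
  obtain ⟨hSIT, hpeak⟩ := hT
  have hSIT' : IsSIT (deltaS α S) (deltaFilling α S T) :=
    ⟨isStandardFilling_deltaFilling hS hSIT.1, rowsIncrease_deltaFilling hS hSIT.2.1 hA,
      firstColIncreases_deltaFilling hpos hS hSIT.2.2⟩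
  refine ⟨hSIT', (peakCond_iff (pos_of_mem_deltaS hpos hS) hSIT').2 ?_⟩
  exact localPeakCond_deltaFilling hpos hS ((peakCond_iff hpos hSIT).1 hpeak)

end Forward

section Backward

variable {n : ℕ} {α : List ℕ} {S : Finset ℕ} {U : ℕ × ℕ → ℕ} {s : ℕ}

theorem entry_lt_deltaBox_three (hpos : ∀ a ∈ α, 0 < a) (hS : S ⊆ Ialpha α)
    (hrow : RowsIncrease (deltaS α S) U) (hcol : FirstColIncreases (deltaS α S) U)
    (hloc : LocalPeakCond (deltaS α S) U) (hs : s ∈ S) {i t : ℕ}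
    (hi : 1 ≤ i) (hi2 : i ≤ 2) (ht : 1 ≤ t) (hte : t ≤ runEnd S s) :
    U (i, t) < U (deltaBox α S (3, s)) := by
  have hpos' := pos_of_mem_deltaS hpos hS
  have hbox := deltaBox_three_mem hS hs
  rw [deltaBox_three_of_mem hs] at hbox ⊢
  obtain ⟨h1t, -⟩ := firstCol_le hpos' hrow hcol hbox ht (by omega)
  obtain ⟨h1t1, hle⟩ := firstCol_le hpos' hrow hcol hbox (Nat.le_add_left 1 t) (by omega)
  obtain ⟨h2t, hlt⟩ := hloc t h1t h1t1
  have hit : (i, t) ∈ cd (deltaS α S) := by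
    obtain ⟨-, h1, h2, h3⟩ := mem_cd_s10.1 h2t
    exact mem_cd_s10.2 ⟨hi, h1, h2, hi2.trans h3⟩
  calc U (i, t) ≤ U (2, t) := (strictMonoOn_row hrow t).monotoneOn hit h2t hi2
    _ < U (1, t + 1) := hlt
    _ ≤ _ := hle

theorem rowsIncrease_deltaFillingInv (hpos : ∀ a ∈ α, 0 < a) (hS : S ⊆ Ialpha α)
    (hrow : RowsIncrease (deltaS α S) U) (hcol : FirstColIncreases (deltaS α S) U)
    (hloc : LocalPeakCond (deltaS α S) U) : RowsIncrease α (deltaFillingInv α S U) := by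
  intro i r h h1
  obtain ⟨hi, hr, -, hir⟩ := mem_cd_s10.1 h1
  by_cases hmv : i + 1 = 3 ∧ r ∈ S
  · obtain ⟨hi3, hrS⟩ := hmv
    obtain rfl : i = 2 := by omega
    rw [deltaFillingInv_of_not_moved h (by omega), deltaFillingInv_of_mem h1]
    exact entry_lt_deltaBox_three hpos hS hrow hcol hloc hrS one_le_two le_rfl hr le_runEnd
  · have hmv' : ¬(i = 3 ∧ r ∈ S) := fun ⟨hi3, hrS⟩ => by
      have := (mem_Ialpha.1 (hS hrS)).2.2.1
      omega
    rw [deltaFillingInv_of_not_moved h hmv', deltaFillingInv_of_not_moved h1 hmv]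
    exact hrow i r (mem_cd_deltaS_of_mem_cd hS h hmv') (mem_cd_deltaS_of_mem_cd hS h1 hmv)

theorem firstColIncreases_deltaFillingInv (hpos : ∀ a ∈ α, 0 < a) (hS : S ⊆ Ialpha α)
    (hcol : FirstColIncreases (deltaS α S) U) :
    FirstColIncreases α (deltaFillingInv α S U) := by
  intro r h h1
  rw [deltaFillingInv_of_not_moved h (by omega), deltaFillingInv_of_not_moved h1 (by omega)]
  exact hcol r ((mem_cd_one_iff hpos hS).2 h) ((mem_cd_one_iff hpos hS).2 h1)

theorem localPeakCond_deltaFillingInv (hα : IsPeakComposition n α) (hS : S ⊆ Ialpha α)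
    (hloc : LocalPeakCond (deltaS α S) U) : LocalPeakCond α (deltaFillingInv α S U) := by
  intro r h h1
  obtain ⟨-, hr, -⟩ := mem_cd_s10.1 h
  obtain ⟨-, -, hr1, -⟩ := mem_cd_s10.1 h1
  have h2 : (2, r) ∈ cd α :=
    mem_cd_s10.2 ⟨one_le_two, hr, by omega, hα.2 (r - 1) (by omega)⟩
  rw [deltaFillingInv_of_not_moved h2 (by omega), deltaFillingInv_of_not_moved h1 (by omega)]
  exact ⟨h2, (hloc r ((mem_cd_one_iff hα.1.1 hS).2 h) ((mem_cd_one_iff hα.1.1 hS).2 h1)).2⟩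

/-- The image of the last box of row `s + 1` lies just left of that of `(3, s)`. -/
theorem deltaBox_part_add_one (hS : S ⊆ Ialpha α) (hs : s ∈ S) :
    deltaBox α S (part α (s + 1), s + 1) =
      (part α (runEnd S s + 1) + (runEnd S s - s), runEnd S s + 1) := by
  by_cases hs1 : s + 1 ∈ S
  · have hle : s + 1 ≤ runEnd S s := by
      by_contra h
      have he : runEnd S s = s := le_antisymm (Nat.lt_succ_iff.1 (not_le.1 h)) le_runEnd
      exact runEnd_add_one_notMem (by rwa [he])
    rw [(mem_Ialpha.1 (hS hs1)).2.2.1, deltaBox_three_of_mem hs1,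
      runEnd_eq_of_le_runEnd hs (Nat.le_succ s) hle]
    exact Prod.ext (by dsimp only; omega) rfl
  · have he : runEnd S s = s := le_antisymm (runEnd_le le_rfl hs1) le_runEnd
    rw [deltaBox_of_not_moved fun h => hs1 h.2, he, Nat.sub_self]
    rfl

theorem deltaFillingInv_last_lt (hα : IsPeakComposition n α) (hS : S ⊆ Ialpha α)
    (hrow : RowsIncrease (deltaS α S) U) (hs : s ∈ S) :
    deltaFillingInv α S U (part α (s + 1), s + 1) < deltaFillingInv α S U (part α s, s) := by
  obtain ⟨hs1, hsl, h3, -⟩ := mem_Ialpha.1 (hS hs)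
  have hlast : (part α (s + 1), s + 1) ∈ cd α :=
    mem_cd_s10.2 ⟨hα.1.1 _ (part_mem (by omega) hsl), by omega, hsl, le_rfl⟩
  have h3s : (3, s) ∈ cd α := mem_cd_s10.2 ⟨by omega, hs1, by omega, h3.ge⟩
  have hbox := deltaBox_mapsTo hS hlast
  have hbox3 := deltaBox_three_mem hS hs
  rw [deltaBox_part_add_one hS hs] at hbox
  rw [h3, deltaFillingInv_of_mem hlast, deltaFillingInv_of_mem h3s, deltaBox_part_add_one hS hs]
  have := le_runEnd (S := S) (s := s)
  rw [deltaBox_three_of_mem hs, show part α (runEnd S s + 1) + (runEnd S s + 1 - s) =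
    part α (runEnd S s + 1) + (runEnd S s - s) + 1 by omega] at hbox3 ⊢
  exact hrow _ _ hbox hbox3

theorem isSPIT_deltaFillingInv (hα : IsPeakComposition n α) (hS : S ⊆ Ialpha α)
    (hU : IsSPIT (deltaS α S) U) : IsSPIT α (deltaFillingInv α S U) := by
  obtain ⟨hSIT, hpeak⟩ := hU
  have hloc := (peakCond_iff (pos_of_mem_deltaS hα.1.1 hS) hSIT).1 hpeak
  have hSIT' : IsSIT α (deltaFillingInv α S U) :=
    ⟨isStandardFilling_deltaFillingInv hS hSIT.1,
      rowsIncrease_deltaFillingInv hα.1.1 hS hSIT.2.1 hSIT.2.2 hloc,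
      firstColIncreases_deltaFillingInv hα.1.1 hS hSIT.2.2⟩
  exact ⟨hSIT', (peakCond_iff hα.1.1 hSIT').2 (localPeakCond_deltaFillingInv hα hS hloc)⟩

end Backward

section Descents

variable {α : List ℕ} {S : Finset ℕ} {T : ℕ × ℕ → ℕ} {s u i t : ℕ}

theorem entry_add_one_lt_entry_three (hpos : ∀ a ∈ α, 0 < a) (hS : S ⊆ Ialpha α)
    (hrow : RowsIncrease α T)
    (hA : ∀ s ∈ S, T (part α (s + 1), s + 1) < T (part α s, s)) (hloc : LocalPeakCond α T)
    (hs : s ∈ S) (hst : s ≤ t) (hte : t ≤ runEnd S s) (hi : 1 ≤ i) (hi2 : i ≤ 2) :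
    T (i, t) + 1 < T (3, s) := by
  have htS := mem_of_le_runEnd hs hst hte
  obtain ⟨ht1, htl, h3, -⟩ := mem_Ialpha.1 (hS htS)
  have hlast : (part α (t + 1), t + 1) ∈ cd α :=
    mem_cd_s10.2 ⟨hpos _ (part_mem (by omega) htl), by omega, htl, le_rfl⟩
  have h1t : (1, t) ∈ cd α := mem_cd_s10.2 ⟨le_rfl, ht1, by omega, by omega⟩
  have h1t1 : (1, t + 1) ∈ cd α := mem_cd_s10.2 ⟨le_rfl, by omega, htl, (mem_cd_s10.1 hlast).1⟩
  obtain ⟨h2t, hlt⟩ := hloc t h1t h1t1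
  have hit : (i, t) ∈ cd α := mem_cd_s10.2 ⟨hi, ht1, by omega, by omega⟩
  have hA' := hA t htS
  rw [h3] at hA'
  calc T (i, t) + 1 ≤ T (2, t) + 1 :=
        Nat.add_le_add_right ((strictMonoOn_row hrow t).monotoneOn hit h2t hi2) 1
    _ ≤ T (1, t + 1) := hlt
    _ ≤ T (part α (t + 1), t + 1) :=
        (strictMonoOn_row hrow _).monotoneOn h1t1 hlast (mem_cd_s10.1 hlast).1
    _ < T (3, t) := hA'
    _ ≤ T (3, s) := (strictAntiOn_entry_three hS hA hs).antitoneOn ⟨le_rfl, le_runEnd⟩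
        ⟨hst, hte⟩ hst

theorem readBefore_deltaBox_three_of_lt (hs : s ∈ S) (hu : u ∈ S) (hsu : s < u) :
    ReadBefore (deltaBox α S (3, u)) (deltaBox α S (3, s)) := by
  have := le_runEnd (S := S) (s := u)
  rw [deltaBox_three_of_mem hs, deltaBox_three_of_mem hu, ReadBefore]
  rcases runEnd_eq_or_lt hs hsu with he | he
  · rw [he]
    exact Or.inr ⟨rfl, by omega⟩
  · exact Or.inl (by dsimp only; omega)

theorem readBefore_deltaBox_three_iff (hs : s ∈ S) (hu : u ∈ S) :
    ReadBefore (deltaBox α S (3, u)) (deltaBox α S (3, s)) ↔ ReadBefore (3, u) (3, s) := by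
  rcases lt_trichotomy s u with h | rfl | h
  · exact iff_of_true (readBefore_deltaBox_three_of_lt hs hu h) (Or.inl h)
  · exact iff_of_false (by simp [ReadBefore]) (by simp [ReadBefore])
  · exact iff_of_false (readBefore_deltaBox_three_of_lt hu hs h).asymm
      (by simp only [ReadBefore]; omega)

/-- Outside the rows `[s, e]` of its run, moving `(3, s)` to row `e + 1` does not change its
position in the reading order relative to a box of `cd α`. -/
theorem readBefore_deltaBox_three_iff_of_notMem (hparts : ∀ a ∈ α, a ≤ 3) (hs : s ∈ S)
    (hb : (i, t) ∈ cd α) (hzone : t ∉ Set.Icc s (runEnd S s)) :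
    (ReadBefore (deltaBox α S (3, s)) (i, t) ↔ ReadBefore (3, s) (i, t)) ∧
      (ReadBefore (i, t) (deltaBox α S (3, s)) ↔ ReadBefore (i, t) (3, s)) := by
  obtain ⟨hi, ht, htl, hit⟩ := mem_cd_s10.1 hb
  have hi3 : i ≤ 3 := hit.trans (hparts _ (part_mem ht htl))
  have hcol : t = runEnd S s + 1 → i ≤ part α (runEnd S s + 1) := fun h => h ▸ hit
  have := le_runEnd (S := S) (s := s)
  rw [Set.mem_Icc] at hzone
  rw [deltaBox_three_of_mem hs]
  simp only [ReadBefore]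
  omega

theorem readBefore_deltaBox_iff (hpos : ∀ a ∈ α, 0 < a) (hparts : ∀ a ∈ α, a ≤ 3)
    (hS : S ⊆ Ialpha α) (hrow : RowsIncrease α T)
    (hA : ∀ s ∈ S, T (part α (s + 1), s + 1) < T (part α s, s)) (hloc : LocalPeakCond α T)
    {p q : ℕ × ℕ} (hp : p ∈ cd α) (hq : q ∈ cd α) (hadj : T q = T p + 1) :
    ReadBefore (deltaBox α S q) (deltaBox α S p) ↔ ReadBefore q p := by
  have hrun : ∀ {s i t}, s ∈ S → (i, t) ∈ cd α → ¬(i = 3 ∧ t ∈ S) → s ≤ t →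
      t ≤ runEnd S s → T (i, t) + 1 < T (3, s) := by
    intro s i t hs hb hnot hst hte
    have htS := mem_of_le_runEnd hs hst hte
    have hi3 := (mem_cd_s10.1 hb).2.2.2
    rw [(mem_Ialpha.1 (hS htS)).2.2.1] at hi3
    have hne : i ≠ 3 := fun h => hnot ⟨h, htS⟩
    exact entry_add_one_lt_entry_three hpos hS hrow hA hloc hs hst hte (mem_cd_s10.1 hb).1 (by omega)
  obtain ⟨i, t⟩ := p
  obtain ⟨j, u⟩ := q
  by_cases hpm : i = 3 ∧ t ∈ S <;> by_cases hqm : j = 3 ∧ u ∈ S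
  · obtain ⟨rfl, ht⟩ := hpm
    obtain ⟨rfl, hu⟩ := hqm
    exact readBefore_deltaBox_three_iff ht hu
  · obtain ⟨rfl, ht⟩ := hpm
    rw [deltaBox_of_not_moved hqm]
    refine (readBefore_deltaBox_three_iff_of_notMem hparts ht hq fun hz => ?_).2
    have := hrun ht hq hqm hz.1 hz.2
    omega
  · obtain ⟨rfl, hu⟩ := hqm
    rw [deltaBox_of_not_moved hpm]
    refine (readBefore_deltaBox_three_iff_of_notMem hparts hu hp fun hz => ?_).1
    have := hrun hu hp hpm hz.1 hz.2
    omega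
  · rw [deltaBox_of_not_moved hpm, deltaBox_of_not_moved hqm]

theorem desWord_deltaFilling (hpos : ∀ a ∈ α, 0 < a) (hparts : ∀ a ∈ α, a ≤ 3)
    (hS : S ⊆ Ialpha α) (hT : IsSPIT α T)
    (hA : ∀ s ∈ S, T (part α (s + 1), s + 1) < T (part α s, s)) :
    DesWord (wR (deltaS α S) (deltaFilling α S T)) = DesWord (wR α T) :=
  desWord_wR_eq_of_bijOn (deltaBox_bijOn hS) hT.1.1.1.injOn
    (fun _ hp => deltaFilling_deltaBox hS hp) fun _ hp _ hq hadj =>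
      readBefore_deltaBox_iff hpos hparts hS hT.1.2.1 hA ((peakCond_iff hpos hT.1).1 hT.2) hp hq
        hadj

end Descents

theorem mem_SPITset_inter_Aset_iff {α : List ℕ} {S : Finset ℕ} {T : ℕ × ℕ → ℕ} :
    T ∈ SPITset α ∩ ⋂ s ∈ S, Aset α s ↔
      IsSPIT α T ∧ ∀ s ∈ S, T (part α (s + 1), s + 1) < T (part α s, s) := by
  simp only [Set.mem_inter_iff, Set.mem_iInter, SPITset, Aset, Set.mem_ofPred_eq]
  exact ⟨fun ⟨h, hA⟩ => ⟨h, fun s hs => (hA s hs).2⟩,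
    fun ⟨h, hA⟩ => ⟨h, fun s hs => ⟨h, hA s hs⟩⟩⟩

/-- Let `α` be a peak composition with all parts at most `3` and let
`S ⊆ I_α`. Then the multisets `{Des(w_r(T)) : T ∈ ⋂_{s∈S} A_α(s)}` and
`{Des(w_r(T)) : T ∈ SPIT(Δ_S(α))}` coincide (for `S = ∅` the intersection is `SPIT(α)`);
equivalently, every `D` occurs with the same multiplicity in both families. -/
theorem descent_multiset_inter_Aset (n : ℕ) (α : List ℕ) (hα : IsPeakComposition n α)
    (hparts : ∀ a ∈ α, a ≤ 3) (S : Finset ℕ) (hS : S ⊆ Ialpha α) (D : Finset ℕ) :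
    {T ∈ SPITset α ∩ ⋂ s ∈ S, Aset α s | DesWord (wR α T) = D}.ncard =
      {T ∈ SPITset (deltaS α S) | DesWord (wR (deltaS α S) T) = D}.ncard := by
  have hpos := hα.1.1
  refine Set.BijOn.ncard_eq (f := deltaFilling α S)
    (Set.InvOn.bijOn (f' := deltaFillingInv α S) ⟨?_, ?_⟩ ?_ ?_)
  · rintro T ⟨hT, -⟩
    exact deltaFillingInv_deltaFilling hS (mem_SPITset_inter_Aset_iff.1 hT).1.1.1.2
  · rintro U ⟨hU, -⟩
    exact deltaFilling_deltaFillingInv hS hU.1.1.2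
  · rintro T ⟨hT, rfl⟩
    obtain ⟨hT, hA⟩ := mem_SPITset_inter_Aset_iff.1 hT
    exact ⟨isSPIT_deltaFilling hpos hS hT hA, desWord_deltaFilling hpos hparts hS hT hA⟩
  · rintro U ⟨hU, rfl⟩
    have hT := isSPIT_deltaFillingInv hα hS hU
    have hA : ∀ s ∈ S, _ := fun s hs => deltaFillingInv_last_lt hα hS hU.1.2.1 hs
    refine ⟨mem_SPITset_inter_Aset_iff.2 ⟨hT, hA⟩, ?_⟩
    rw [← desWord_deltaFilling hpos hparts hS hT hA, deltaFilling_deltaFillingInv hS hU.1.1.2]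

end PaperSPIT
end
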